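/- arXiv:1703.03553 — 7 statements merged into one kernel-verified Lean document; each statement's English description precedes it below -/
import Mathlib

section
/- Let Ω ⊂ ℝ³ be a bounded domain, A, B > 0, χ ≥ 0, and let J be an even measurable kernel with a(x) := ∫_Ω J(x−y) dy ≥ 0 a.e. in Ω, a* := sup_{x∈Ω} ∫_Ω |J(x−y)| dy < ∞, a_* := inf_{x∈Ω} ∫_Ω J(x−y) dy. Let Ψ : ℝ → ℝ be continuous and satisfy Ψ(s) ≥ c₂|s|² − c₁ for all s ∈ ℝ, with c₁ ∈ ℝ and c₂ > (B(a* − a_*) + χ²)/(2A). Then there exist constants η₀ ∈ (0,1/2), γ₀ > 0 and C ≥ 0, depending only on A, B, χ, c₁, c₂, a*, a_* and |Ω|, such that for all φ, σ ∈ L²(Ω) with Ψ(φ) ∈ L¹(Ω): E(φ,σ) ≥ η₀‖σ‖²_{L²(Ω)} + γ₀‖φ‖²_{L²(Ω)} − C. -/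
/-!
Split the energy into a local and a nonlocal part. Locally, `Ψ(s) ≥ c₂ s² - c₁` gives `A c₂ φ²`,
and Young's inequality absorbs the coupling `χ σ (1 - φ)` into `(1/2 - t) σ²` at the price of
`χ² / (2 - 8t) · φ²` and a constant. Nonlocally, `∫ a φ² ≥ a_* ‖φ‖²`, while the Schur test bounds
`∫ φ (J ⋆ φ)` by `a* ‖φ‖²`, since by evenness of `J` both the rows and the columns of the kernel
`J (x - y)` on `Ω` have `L¹` mass at most `a*`. As `t → 0` the price tends to `χ² / 2`, and the
hypothesis on `c₂` is exactly what keeps the coefficient of `‖φ‖²` positive for small `t`.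
-/

open MeasureTheory Set Filter Topology

open scoped ENNReal NNReal

section SchurTest

variable {α : Type*} [MeasurableSpace α] {μ : Measure α}

theorem lintegral_lintegral_kernel_mul_le {k : α → α → ℝ≥0∞}
    (hk : Measurable (Function.uncurry k)) {c : ℝ≥0∞} (hrow : ∀ᵐ x ∂μ, ∫⁻ y, k x y ∂μ ≤ c)
    {g : α → ℝ≥0∞} (hg : AEMeasurable g μ) :
    ∫⁻ x, ∫⁻ y, k x y * g x ∂μ ∂μ ≤ c * ∫⁻ x, g x ∂μ :=
  calc ∫⁻ x, ∫⁻ y, k x y * g x ∂μ ∂μ = ∫⁻ x, (∫⁻ y, k x y ∂μ) * g x ∂μ :=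
        lintegral_congr fun x => lintegral_mul_const _ hk.of_uncurry_left
    _ ≤ ∫⁻ x, c * g x ∂μ := lintegral_mono_ae (hrow.mono fun x hx => by gcongr)
    _ = c * ∫⁻ x, g x ∂μ := lintegral_const_mul'' c hg

/-- Schur test: `2 f(x) f(y) ≤ f(x)² + f(y)²` splits the double integral into a row and a column
integral of the kernel. -/
theorem lintegral_mul_lintegral_kernel_le [SFinite μ] {k : α → α → ℝ≥0∞}
    (hk : Measurable (Function.uncurry k)) {c : ℝ≥0∞} (hrow : ∀ᵐ x ∂μ, ∫⁻ y, k x y ∂μ ≤ c)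
    (hcol : ∀ᵐ y ∂μ, ∫⁻ x, k x y ∂μ ≤ c) {f : α → ℝ≥0} (hf : AEMeasurable f μ) :
    ∫⁻ x, f x * ∫⁻ y, k x y * f y ∂μ ∂μ ≤ c * ∫⁻ x, (f x : ℝ≥0∞) ^ 2 ∂μ := by
  have hf2 : AEMeasurable (fun x => (f x : ℝ≥0∞) ^ 2) μ := hf.coe_nnreal_ennreal.pow_const 2
  have hrow' := lintegral_lintegral_kernel_mul_le hk hrow hf2
  have hcol' : ∫⁻ x, ∫⁻ y, k x y * f y ^ 2 ∂μ ∂μ ≤ c * ∫⁻ x, (f x : ℝ≥0∞) ^ 2 ∂μ := by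
    rw [lintegral_lintegral_swap (hk.aemeasurable.mul (hf2.comp_quasiMeasurePreserving
      Measure.quasiMeasurePreserving_snd))]
    exact lintegral_lintegral_kernel_mul_le (k := fun y x => k x y)
      (hk.comp measurable_swap) hcol hf2
  have hamgm : ∀ x y, k x y * (2 * (f x * f y)) ≤ k x y * f x ^ 2 + k x y * f y ^ 2 := by
    intro x y
    rw [← mul_add]
    gcongr
    exact_mod_cast (mul_assoc (2 : ℝ≥0) _ _ ▸ two_mul_le_add_sq (f x) (f y))
  have hsplit : ∫⁻ x, ∫⁻ y, k x y * f x ^ 2 + k x y * f y ^ 2 ∂μ ∂μ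
      = ∫⁻ x, ∫⁻ y, k x y * f x ^ 2 ∂μ ∂μ + ∫⁻ x, ∫⁻ y, k x y * f y ^ 2 ∂μ ∂μ := by
    have hmeas : AEMeasurable (fun x => ∫⁻ y, k x y * (f x : ℝ≥0∞) ^ 2 ∂μ) μ :=
      (hk.aemeasurable.mul (hf2.comp_quasiMeasurePreserving
        Measure.quasiMeasurePreserving_fst)).lintegral_prod_right'
    rw [← lintegral_add_left' hmeas]
    exact lintegral_congr fun x => lintegral_add_left (hk.of_uncurry_left.mul_const _) _
  refine (ENNReal.mul_le_mul_iff_right (a := 2) (by norm_num) (by norm_num)).1 ?_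
  calc 2 * ∫⁻ x, f x * ∫⁻ y, k x y * f y ∂μ ∂μ
      = ∫⁻ x, ∫⁻ y, k x y * (2 * (f x * f y)) ∂μ ∂μ := by
        rw [← lintegral_const_mul' _ _ (by norm_num)]
        refine lintegral_congr fun x => ?_
        rw [← mul_assoc, ← lintegral_const_mul' _ _ (by finiteness)]
        exact lintegral_congr fun y => by ring
    _ ≤ ∫⁻ x, ∫⁻ y, k x y * f x ^ 2 + k x y * f y ^ 2 ∂μ ∂μ :=
        lintegral_mono fun x => lintegral_mono fun y => hamgm x y
    _ ≤ 2 * (c * ∫⁻ x, (f x : ℝ≥0∞) ^ 2 ∂μ) := by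
        rw [hsplit, two_mul]; exact add_le_add hrow' hcol'

theorem lintegral_enorm_sq_eq_ofReal_integral_sq {φ : α → ℝ}
    (hφ : Integrable (fun x => φ x ^ 2) μ) :
    ∫⁻ x, ‖φ x‖ₑ ^ 2 ∂μ = ENNReal.ofReal (∫ x, φ x ^ 2 ∂μ) := by
  rw [ofReal_integral_eq_lintegral_ofReal hφ (.of_forall fun x => sq_nonneg _)]
  refine lintegral_congr fun x => ?_
  rw [Real.enorm_eq_ofReal_abs, ← ENNReal.ofReal_pow (abs_nonneg _), sq_abs]

theorem lintegral_enorm_mul_integral_kernel_le [SFinite μ] {K : α → α → ℝ}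
    (hK : Measurable (Function.uncurry K)) {c : ℝ≥0∞} (hrow : ∀ᵐ x ∂μ, ∫⁻ y, ‖K x y‖ₑ ∂μ ≤ c)
    (hcol : ∀ᵐ y ∂μ, ∫⁻ x, ‖K x y‖ₑ ∂μ ≤ c) {φ : α → ℝ} (hφ : AEMeasurable φ μ) :
    ∫⁻ x, ‖φ x * ∫ y, K x y * φ y ∂μ‖ₑ ∂μ ≤ c * ∫⁻ x, ‖φ x‖ₑ ^ 2 ∂μ :=
  calc ∫⁻ x, ‖φ x * ∫ y, K x y * φ y ∂μ‖ₑ ∂μ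
      ≤ ∫⁻ x, ‖φ x‖ₑ * ∫⁻ y, ‖K x y‖ₑ * ‖φ y‖ₑ ∂μ ∂μ := lintegral_mono fun x => by
        rw [enorm_mul]
        gcongr
        simpa only [enorm_mul] using enorm_integral_le_lintegral_enorm (fun y => K x y * φ y)
    _ ≤ c * ∫⁻ x, ‖φ x‖ₑ ^ 2 ∂μ :=
        lintegral_mul_lintegral_kernel_le hK.enorm hrow hcol hφ.nnnorm

variable [SFinite μ] {K : α → α → ℝ} (hK : Measurable (Function.uncurry K)) {c : ℝ}
  (hrow : ∀ᵐ x ∂μ, ∫⁻ y, ‖K x y‖ₑ ∂μ ≤ ENNReal.ofReal c)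
  (hcol : ∀ᵐ y ∂μ, ∫⁻ x, ‖K x y‖ₑ ∂μ ≤ ENNReal.ofReal c) {φ : α → ℝ} (hφ : MemLp φ 2 μ)
include hK hrow hcol hφ

theorem integrable_mul_integral_kernel :
    Integrable (fun x => φ x * ∫ y, K x y * φ y ∂μ) μ := by
  refine ⟨hφ.1.mul (hK.aestronglyMeasurable.mul hφ.1.comp_snd).integral_prod_right', ?_⟩
  refine (lintegral_enorm_mul_integral_kernel_le hK hrow hcol hφ.1.aemeasurable).trans_lt ?_
  rw [lintegral_enorm_sq_eq_ofReal_integral_sq hφ.integrable_sq]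
  exact ENNReal.mul_lt_top ENNReal.ofReal_lt_top ENNReal.ofReal_lt_top

theorem integral_mul_integral_kernel_le (hc : 0 ≤ c) :
    ∫ x, φ x * ∫ y, K x y * φ y ∂μ ∂μ ≤ c * ∫ x, φ x ^ 2 ∂μ := by
  have hint := integrable_mul_integral_kernel hK hrow hcol hφ
  calc ∫ x, φ x * ∫ y, K x y * φ y ∂μ ∂μ ≤ ∫ x, ‖φ x * ∫ y, K x y * φ y ∂μ‖ ∂μ :=
        integral_mono hint hint.norm fun x => Real.le_norm_self _
    _ = (∫⁻ x, ‖φ x * ∫ y, K x y * φ y ∂μ‖ₑ ∂μ).toReal := integral_norm_eq_lintegral_enorm hint.1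
    _ ≤ (ENNReal.ofReal c * ENNReal.ofReal (∫ x, φ x ^ 2 ∂μ)).toReal := by
        refine ENNReal.toReal_mono (by finiteness) ?_
        rw [← lintegral_enorm_sq_eq_ofReal_integral_sq hφ.integrable_sq]
        exact lintegral_enorm_mul_integral_kernel_le hK hrow hcol hφ.1.aemeasurable
    _ = c * ∫ x, φ x ^ 2 ∂μ := by
        rw [← ENNReal.ofReal_mul hc, ENNReal.toReal_ofReal
          (mul_nonneg hc (integral_nonneg fun x => sq_nonneg _))]

end SchurTest

section Nonlocal

variable {G : Type*} [MeasurableSpace G] [AddGroup G] {μ : Measure G} {Ω : Set G} {J : G → ℝ}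
  {c : ℝ}

theorem lintegral_enorm_sub_le {x : G} (hint : IntegrableOn (fun y => J (x - y)) Ω μ)
    (hc : ∫ y in Ω, |J (x - y)| ∂μ ≤ c) : ∫⁻ y in Ω, ‖J (x - y)‖ₑ ∂μ ≤ ENNReal.ofReal c := by
  rw [← ofReal_integral_norm_eq_lintegral_enorm hint]
  exact ENNReal.ofReal_le_ofReal hc

theorem ae_restrict_lintegral_enorm_sub_le (hΩ : MeasurableSet Ω)
    (hJint : ∀ x ∈ Ω, IntegrableOn (fun y => J (x - y)) Ω μ)
    (hc : ∀ x ∈ Ω, ∫ y in Ω, |J (x - y)| ∂μ ≤ c) :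
    ∀ᵐ x ∂μ.restrict Ω, ∫⁻ y in Ω, ‖J (x - y)‖ₑ ∂μ ≤ ENNReal.ofReal c := by
  filter_upwards [ae_restrict_mem hΩ] with x hx using lintegral_enorm_sub_le (hJint x hx) (hc x hx)

theorem ae_restrict_lintegral_enorm_sub_le_swap (hΩ : MeasurableSet Ω)
    (hJeven : ∀ z, J (-z) = J z) (hJint : ∀ x ∈ Ω, IntegrableOn (fun y => J (x - y)) Ω μ)
    (hc : ∀ x ∈ Ω, ∫ y in Ω, |J (x - y)| ∂μ ≤ c) :
    ∀ᵐ y ∂μ.restrict Ω, ∫⁻ x in Ω, ‖J (x - y)‖ₑ ∂μ ≤ ENNReal.ofReal c := by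
  refine (ae_restrict_lintegral_enorm_sub_le hΩ hJint hc).mono fun y hy => ?_
  simpa only [← neg_sub _ y, hJeven] using hy

variable [MeasurableSub₂ G] [SFinite μ]

theorem integrable_integral_sub_mul (hΩ : MeasurableSet Ω) (hJ : Measurable J)
    (hc : ∀ x ∈ Ω, ∫ y in Ω, |J (x - y)| ∂μ ≤ c) {g : G → ℝ} (hg : Integrable g (μ.restrict Ω)) :
    Integrable (fun x => (∫ y in Ω, J (x - y) ∂μ) * g x) (μ.restrict Ω) := by
  refine hg.bdd_mul (c := c)
    (hJ.comp measurable_sub).stronglyMeasurable.integral_prod_right'.aestronglyMeasurable ?_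
  filter_upwards [ae_restrict_mem hΩ] with x hx
  exact (norm_integral_le_integral_norm _).trans (hc x hx)

variable (hΩ : MeasurableSet Ω) (hJ : Measurable J) (hJeven : ∀ z, J (-z) = J z)
  (hJint : ∀ x ∈ Ω, IntegrableOn (fun y => J (x - y)) Ω μ)
  (hc : ∀ x ∈ Ω, ∫ y in Ω, |J (x - y)| ∂μ ≤ c) {φ : G → ℝ} (hφ : MemLp φ 2 (μ.restrict Ω))
include hΩ hJ hJeven hJint hc hφ

theorem integrable_mul_integral_sub :
    Integrable (fun x => φ x * ∫ y in Ω, J (x - y) * φ y ∂μ) (μ.restrict Ω) :=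
  integrable_mul_integral_kernel (K := fun x y => J (x - y)) (hJ.comp measurable_sub)
    (ae_restrict_lintegral_enorm_sub_le hΩ hJint hc)
    (ae_restrict_lintegral_enorm_sub_le_swap hΩ hJeven hJint hc) hφ

theorem integral_mul_integral_sub_le :
    ∫ x in Ω, φ x * ∫ y in Ω, J (x - y) * φ y ∂μ ∂μ ≤ c * ∫ x in Ω, φ x ^ 2 ∂μ := by
  rcases Ω.eq_empty_or_nonempty with rfl | ⟨x₀, hx₀⟩
  · simp
  exact integral_mul_integral_kernel_le (K := fun x y => J (x - y)) (hJ.comp measurable_sub)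
    (ae_restrict_lintegral_enorm_sub_le hΩ hJint hc)
    (ae_restrict_lintegral_enorm_sub_le_swap hΩ hJeven hJint hc) hφ
    ((integral_nonneg fun _ => abs_nonneg _).trans (hc x₀ hx₀))

theorem integral_nonlocal_energy_ge {c' : ℝ} (hc' : ∀ x ∈ Ω, c' ≤ ∫ y in Ω, J (x - y) ∂μ) :
    (c' - c) * ∫ x in Ω, φ x ^ 2 ∂μ ≤ ∫ x in Ω, ((∫ y in Ω, J (x - y) ∂μ) * φ x ^ 2
      - φ x * ∫ y in Ω, J (x - y) * φ y ∂μ) ∂μ := by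
  have hφ2 := hφ.integrable_sq
  have hmass : c' * ∫ x in Ω, φ x ^ 2 ∂μ ≤ ∫ x in Ω, (∫ y in Ω, J (x - y) ∂μ) * φ x ^ 2 ∂μ := by
    rw [← integral_const_mul]
    refine integral_mono_ae (hφ2.const_mul c') (integrable_integral_sub_mul hΩ hJ hc hφ2) ?_
    filter_upwards [ae_restrict_mem hΩ] with x hx
    exact mul_le_mul_of_nonneg_right (hc' x hx) (sq_nonneg _)
  rw [integral_sub (integrable_integral_sub_mul hΩ hJ hc hφ2)
    (integrable_mul_integral_sub hΩ hJ hJeven hJint hc hφ)]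
  linarith [integral_mul_integral_sub_le hΩ hJ hJeven hJint hc hφ]

end Nonlocal

section LocalEnergy

theorem young_cross_term_ge {χ σ s t : ℝ} (ht0 : 0 < t) (ht : t < 1 / 4) :
    t * σ ^ 2 - χ ^ 2 / (4 * t) - χ ^ 2 / (2 - 8 * t) * s ^ 2
      ≤ 1 / 2 * σ ^ 2 + χ * σ * (1 - s) := by
  have h₁ : 0 ≤ t * σ ^ 2 + χ * σ + χ ^ 2 / (4 * t) := by
    rw [show t * σ ^ 2 + χ * σ + χ ^ 2 / (4 * t) = t * (σ + χ / (2 * t)) ^ 2 by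
      field_simp; ring]
    positivity
  have h₂ : 0 ≤ (1 / 2 - 2 * t) * σ ^ 2 - χ * σ * s + χ ^ 2 / (2 - 8 * t) * s ^ 2 := by
    have hpos : 0 < 2 - 8 * t := by linarith
    refine (mul_nonneg_iff_of_pos_left hpos).1 ?_
    rw [show (2 - 8 * t) * ((1 / 2 - 2 * t) * σ ^ 2 - χ * σ * s + χ ^ 2 / (2 - 8 * t) * s ^ 2)
        = ((1 - 4 * t) * σ - χ * s) ^ 2 by field_simp; ring]
    positivity
  linarith

variable {α : Type*} [MeasurableSpace α] {μ : Measure α} [IsFiniteMeasure μ]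
  {A χ : ℝ} {Ψ : ℝ → ℝ} {φ σ : α → ℝ}

theorem integrable_local_energy (hΨφ : Integrable (fun x => Ψ (φ x)) μ) (hφ : MemLp φ 2 μ)
    (hσ : MemLp σ 2 μ) :
    Integrable (fun x => A * Ψ (φ x) + 1 / 2 * σ x ^ 2 + χ * σ x * (1 - φ x)) μ := by
  have hcross : Integrable (fun x => χ * (σ x * (1 - φ x))) μ :=
    (hσ.integrable_mul ((memLp_const 1).sub hφ)).const_mul χ
  simpa only [mul_assoc] using
    ((hΨφ.const_mul A).fun_add (hσ.integrable_sq.const_mul _)).fun_add hcross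

theorem integral_local_energy_ge {c₁ c₂ t : ℝ} (hA : 0 ≤ A) (ht0 : 0 < t) (ht : t < 1 / 4)
    (hΨ : ∀ s, c₂ * |s| ^ 2 - c₁ ≤ Ψ s) (hΨφ : Integrable (fun x => Ψ (φ x)) μ)
    (hφ : MemLp φ 2 μ) (hσ : MemLp σ 2 μ) :
    t * ∫ x, σ x ^ 2 ∂μ + (A * c₂ - χ ^ 2 / (2 - 8 * t)) * ∫ x, φ x ^ 2 ∂μ
        - (A * c₁ + χ ^ 2 / (4 * t)) * μ.real univ
      ≤ ∫ x, (A * Ψ (φ x) + 1 / 2 * σ x ^ 2 + χ * σ x * (1 - φ x)) ∂μ := by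
  have hσ2 := hσ.integrable_sq.const_mul t
  have hφ2 := hφ.integrable_sq.const_mul (A * c₂ - χ ^ 2 / (2 - 8 * t))
  calc _ = ∫ x, (t * σ x ^ 2 + (A * c₂ - χ ^ 2 / (2 - 8 * t)) * φ x ^ 2
          - (A * c₁ + χ ^ 2 / (4 * t))) ∂μ := by
        rw [integral_sub (hσ2.fun_add hφ2) (integrable_const _), integral_add hσ2 hφ2,
          integral_const_mul, integral_const_mul, integral_const, smul_eq_mul, mul_comm (μ.real _)]
    _ ≤ _ := by
      refine integral_mono ((hσ2.fun_add hφ2).sub' (integrable_const _))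
        (integrable_local_energy hΨφ hφ hσ) fun x => ?_
      have hΨx := mul_le_mul_of_nonneg_left (hΨ (φ x)) hA
      rw [sq_abs] at hΨx
      have := young_cross_term_ge (χ := χ) (σ := σ x) (s := φ x) ht0 ht
      linarith

end LocalEnergy

theorem exists_young_weight {χ L : ℝ} (h : χ ^ 2 / 2 < L) :
    ∃ t ∈ Ioo (0 : ℝ) (1 / 4), χ ^ 2 / (2 - 8 * t) < L := by
  have hcont : ContinuousAt (fun t : ℝ => χ ^ 2 / (2 - 8 * t)) 0 := by
    fun_prop (disch := norm_num)
  have hlt : ∀ᶠ t in 𝓝[>] 0, χ ^ 2 / (2 - 8 * t) < L :=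
    nhdsWithin_le_nhds (hcont.eventually (gt_mem_nhds (by simpa using h)))
  obtain ⟨t, hL, ht⟩ := (hlt.and (Ioo_mem_nhdsGT (by norm_num : (0 : ℝ) < 1 / 4))).exists
  exact ⟨t, ht, hL⟩

theorem stmt_2_general
    (Ω : Set (Fin 3 → ℝ))
    (hΩbdd : Bornology.IsBounded Ω) (hΩmeas : MeasurableSet Ω)
    (A B χ : ℝ) (hA : 0 < A) (hB : 0 < B)
    (J : (Fin 3 → ℝ) → ℝ) (hJmeas : Measurable J) (hJeven : ∀ z, J (-z) = J z)
    (hJint : ∀ x ∈ Ω, IntegrableOn (fun y => J (x - y)) Ω)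
    (astar aflat : ℝ)
    (hastar : ∀ x ∈ Ω, (∫ y in Ω, |J (x - y)|) ≤ astar)
    (haflat : ∀ x ∈ Ω, aflat ≤ ∫ y in Ω, J (x - y))
    (Ψ : ℝ → ℝ)
    (c₁ c₂ : ℝ) (hΨlb : ∀ s : ℝ, c₂ * |s| ^ 2 - c₁ ≤ Ψ s)
    (hc₂ : (B * (astar - aflat) + χ ^ 2) / (2 * A) < c₂) :
    ∃ η₀ γ₀ C : ℝ, η₀ ∈ Set.Ioo (0 : ℝ) (1 / 2) ∧ 0 < γ₀ ∧ 0 ≤ C ∧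
      ∀ φ σ : (Fin 3 → ℝ) → ℝ,
        MemLp φ 2 (volume.restrict Ω) → MemLp σ 2 (volume.restrict Ω) →
        IntegrableOn (fun x => Ψ (φ x)) Ω →
        η₀ * (∫ x in Ω, (σ x) ^ 2) + γ₀ * (∫ x in Ω, (φ x) ^ 2) - C ≤
          ∫ x in Ω, (A * Ψ (φ x) + B / 2 * (∫ y in Ω, J (x - y)) * (φ x) ^ 2
            - B / 2 * φ x * (∫ y in Ω, J (x - y) * φ y)
            + 1 / 2 * (σ x) ^ 2 + χ * σ x * (1 - φ x)) := by
  have hgap : χ ^ 2 / 2 < A * c₂ - B / 2 * (astar - aflat) := by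
    rw [div_lt_iff₀ (by positivity)] at hc₂
    linarith
  obtain ⟨t, ⟨ht0, ht⟩, hκ⟩ := exists_young_weight hgap
  have : IsFiniteMeasure (volume.restrict Ω) :=
    isFiniteMeasure_restrict.2 hΩbdd.measure_lt_top.ne
  refine ⟨t, A * c₂ - χ ^ 2 / (2 - 8 * t) - B / 2 * (astar - aflat),
    (A * |c₁| + χ ^ 2 / (4 * t)) * volume.real Ω, ⟨ht0, by linarith⟩, by linarith, by positivity,
    fun φ σ hφ hσ hΨφ => ?_⟩
  have hloc := integral_local_energy_ge (χ := χ) hA.le ht0 ht hΨlb hΨφ hφ hσ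
  rw [measureReal_restrict_apply_univ] at hloc
  have hnonloc := integral_nonlocal_energy_ge hΩmeas hJmeas hJeven hJint hastar hφ haflat
  have hφ2 := hφ.integrable_sq
  have hc₁ : A * c₁ ≤ A * |c₁| := mul_le_mul_of_nonneg_left (le_abs_self c₁) hA.le
  calc _ ≤ (∫ x in Ω, (A * Ψ (φ x) + 1 / 2 * σ x ^ 2 + χ * σ x * (1 - φ x))) + B / 2 *
        ∫ x in Ω, ((∫ y in Ω, J (x - y)) * φ x ^ 2 - φ x * ∫ y in Ω, J (x - y) * φ y) := by
        linarith [mul_le_mul_of_nonneg_right hc₁ (measureReal_nonneg (μ := volume) (s := Ω)),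
          mul_le_mul_of_nonneg_left hnonloc (by positivity : (0 : ℝ) ≤ B / 2)]
    _ = _ := by
      rw [← integral_const_mul, ← integral_add (integrable_local_energy hΨφ hφ hσ)
        (((integrable_integral_sub_mul hΩmeas hJmeas hastar hφ2).sub'
          (integrable_mul_integral_sub hΩmeas hJmeas hJeven hJint hastar hφ)).const_mul _)]
      congr 1 with x
      ring

/-- Coercivity of the free energy
`E(φ,σ) = ∫_Ω [AΨ(φ) + (B/2)a|φ|² - (B/2)φ(J⋆φ) + (1/2)|σ|² + χσ(1-φ)] dx`:
there exist `η₀ ∈ (0,1/2)`, `γ₀ > 0`, `C ≥ 0` such that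
`E(φ,σ) ≥ η₀‖σ‖²_{L²} + γ₀‖φ‖²_{L²} - C` for all `φ, σ ∈ L²(Ω)` with `Ψ(φ) ∈ L¹(Ω)`. -/
theorem stmt_2
    (Ω : Set (Fin 3 → ℝ)) (hΩopen : IsOpen Ω) (hΩconn : IsConnected Ω)
    (hΩbdd : Bornology.IsBounded Ω) (hΩmeas : MeasurableSet Ω)
    (A B χ : ℝ) (hA : 0 < A) (hB : 0 < B) (hχ : 0 ≤ χ)
    (J : (Fin 3 → ℝ) → ℝ) (hJmeas : Measurable J) (hJeven : ∀ z, J (-z) = J z)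
    (hJint : ∀ x ∈ Ω, IntegrableOn (fun y => J (x - y)) Ω)
    (ha0 : ∀ᵐ x ∂(volume.restrict Ω), 0 ≤ ∫ y in Ω, J (x - y))
    (astar aflat : ℝ)
    (hastar : ∀ x ∈ Ω, (∫ y in Ω, |J (x - y)|) ≤ astar)
    (haflat : ∀ x ∈ Ω, aflat ≤ ∫ y in Ω, J (x - y))
    (Ψ : ℝ → ℝ) (hΨcont : Continuous Ψ)
    (c₁ c₂ : ℝ) (hΨlb : ∀ s : ℝ, c₂ * |s| ^ 2 - c₁ ≤ Ψ s)
    (hc₂ : (B * (astar - aflat) + χ ^ 2) / (2 * A) < c₂) :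
    ∃ η₀ γ₀ C : ℝ, η₀ ∈ Set.Ioo (0 : ℝ) (1 / 2) ∧ 0 < γ₀ ∧ 0 ≤ C ∧
      ∀ φ σ : (Fin 3 → ℝ) → ℝ,
        MemLp φ 2 (volume.restrict Ω) → MemLp σ 2 (volume.restrict Ω) →
        IntegrableOn (fun x => Ψ (φ x)) Ω →
        η₀ * (∫ x in Ω, (σ x) ^ 2) + γ₀ * (∫ x in Ω, (φ x) ^ 2) - C ≤
          ∫ x in Ω, (A * Ψ (φ x) + B / 2 * (∫ y in Ω, J (x - y)) * (φ x) ^ 2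
            - B / 2 * φ x * (∫ y in Ω, J (x - y) * φ y)
            + 1 / 2 * (σ x) ^ 2 + χ * σ x * (1 - φ x)) :=
  stmt_2_general Ω hΩbdd hΩmeas A B χ hA hB J hJmeas hJeven hJint astar aflat hastar haflat Ψ c₁ c₂
    hΨlb hc₂
end

section
/- Let Ψ₁ ∈ C²((−1,1)) and let ε₀ ∈ (0,1] be such that Ψ₁″ is non-decreasing on [1−ε₀,1) and non-increasing on (−1,−1+ε₀]. Then for every ε ∈ (0,ε₀] and every s ∈ (−1,1): Ψ_{1,ε}(s) ≤ Ψ₁(s) + ε³/6. -/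
open Set

/-- The regularization `Ψ_{1,ε}` of a singular potential `Ψ₁ ∈ C²((-1,1))`,
built from `Ψ₁` and (functions representing) its first and second derivatives. -/
noncomputable def psi1eps (Ψ Ψ' Ψ'' : ℝ → ℝ) (ε s : ℝ) : ℝ :=
  if 1 - ε ≤ s then
    Ψ (1 - ε) + Ψ' (1 - ε) * (s - (1 - ε)) + (1 / 2) * Ψ'' (1 - ε) * (s - (1 - ε)) ^ 2
      + (1 / 6) * (s - (1 - ε)) ^ 3
  else if s ≤ -1 + ε then
    Ψ (-1 + ε) + Ψ' (-1 + ε) * (s - (ε - 1)) + (1 / 2) * Ψ'' (-1 + ε) * (s - (ε - 1)) ^ 2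
      + (1 / 6) * |s - (ε - 1)| ^ 3
  else Ψ s

/-! Near `1` the regularization is the second-order Taylor polynomial of `Ψ₁` at `1 - ε` plus
`(s - (1 - ε))³ / 6`. Since `Ψ₁″` is non-decreasing there, `Ψ₁″ ≥ Ψ₁″(1 - ε)` on `[1 - ε, s]`,
so the Taylor polynomial lies below `Ψ₁(s)`, while the cubic term is at most `ε³ / 6` because
`0 ≤ s - (1 - ε) < ε`. The case near `-1` is symmetric, and in between `Ψ_{1,ε} = Ψ₁`. -/

theorem sub_le_sub_of_hasDerivAt_le {g h g' h' : ℝ → ℝ} {a b : ℝ} (hab : a ≤ b)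
    (hg : ∀ x ∈ Icc a b, HasDerivAt g (g' x) x) (hh : ∀ x ∈ Icc a b, HasDerivAt h (h' x) x)
    (hle : ∀ x ∈ Icc a b, h' x ≤ g' x) : h b - h a ≤ g b - g a := by
  have hderiv : ∀ x ∈ Icc a b, HasDerivAt (fun x ↦ g x - h x) (g' x - h' x) x :=
    fun x hx ↦ (hg x hx).sub (hh x hx)
  have hmono : MonotoneOn (fun x ↦ g x - h x) (Icc a b) :=
    monotoneOn_of_hasDerivWithinAt_nonneg (convex_Icc a b)
      (fun x hx ↦ (hderiv x hx).continuousAt.continuousWithinAt)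
      (fun x hx ↦ (hderiv x (interior_subset hx)).hasDerivWithinAt)
      (fun x hx ↦ sub_nonneg.2 (hle x (interior_subset hx)))
  have := hmono (left_mem_Icc.2 hab) (right_mem_Icc.2 hab) hab
  linarith

theorem taylor_quadratic_le_of_le_deriv2_of_le {f f' f'' : ℝ → ℝ} {a b c : ℝ} (hab : a ≤ b)
    (hf : ∀ x ∈ Icc a b, HasDerivAt f (f' x) x) (hf' : ∀ x ∈ Icc a b, HasDerivAt f' (f'' x) x)
    (hc : ∀ x ∈ Icc a b, c ≤ f'' x) :
    f a + f' a * (b - a) + c / 2 * (b - a) ^ 2 ≤ f b := by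
  have hlin : ∀ x ∈ Icc a b, f' a + c * (x - a) ≤ f' x := by
    intro x hx
    have := sub_le_sub_of_hasDerivAt_le hx.1
      (fun y hy ↦ hf' y ⟨hy.1, hy.2.trans hx.2⟩)
      (fun y _ ↦ ((hasDerivAt_id' y).sub_const a).const_mul c)
      (fun y hy ↦ by simpa using hc y ⟨hy.1, hy.2.trans hx.2⟩)
    linarith
  have hquad : ∀ x, HasDerivAt (fun y ↦ f' a * (y - a) + c / 2 * (y - a) ^ 2)
      (f' a + c * (x - a)) x := by
    intro x
    refine ((((hasDerivAt_id' x).sub_const a).const_mul (f' a)).add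
      ((((hasDerivAt_id' x).sub_const a).pow 2).const_mul (c / 2))).congr_deriv ?_
    norm_num
    ring
  have := sub_le_sub_of_hasDerivAt_le hab hf (fun x _ ↦ hquad x) hlin
  simp only [sub_self] at this
  linarith

theorem taylor_quadratic_le_of_le_deriv2 {f f' f'' : ℝ → ℝ} {a b c : ℝ}
    (hf : ∀ x ∈ uIcc a b, HasDerivAt f (f' x) x) (hf' : ∀ x ∈ uIcc a b, HasDerivAt f' (f'' x) x)
    (hc : ∀ x ∈ uIcc a b, c ≤ f'' x) :
    f a + f' a * (b - a) + c / 2 * (b - a) ^ 2 ≤ f b := by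
  rcases le_total a b with hab | hba
  · rw [uIcc_of_le hab] at hf hf' hc
    exact taylor_quadratic_le_of_le_deriv2_of_le hab hf hf' hc
  · rw [uIcc_of_ge hba] at hf hf' hc
    have hneg : ∀ x ∈ Icc (-a) (-b), -x ∈ Icc b a :=
      fun x hx ↦ ⟨by linarith [hx.2], by linarith [hx.1]⟩
    have := taylor_quadratic_le_of_le_deriv2_of_le (f := fun x ↦ f (-x)) (f' := fun x ↦ -f' (-x))
      (f'' := fun x ↦ f'' (-x)) (c := c) (neg_le_neg hba)
      (fun x hx ↦ ((hf (-x) (hneg x hx)).comp x (hasDerivAt_neg' x)).congr_deriv (by ring))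
      (fun x hx ↦ ((hf' (-x) (hneg x hx)).comp x (hasDerivAt_neg' x)).neg.congr_deriv (by ring))
      (fun x hx ↦ hc (-x) (hneg x hx))
    simp only [neg_neg] at this
    linarith

theorem stmt_5_general
    (Ψ₁ Ψ₁' Ψ₁'' : ℝ → ℝ)
    (hΨd : ∀ s ∈ Ioo (-1 : ℝ) 1, HasDerivAt Ψ₁ (Ψ₁' s) s)
    (hΨd2 : ∀ s ∈ Ioo (-1 : ℝ) 1, HasDerivAt Ψ₁' (Ψ₁'' s) s)
    (ε₀ : ℝ) (hε₀ : ε₀ ∈ Ioc (0 : ℝ) 1)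
    (hmonoP : ∀ s t : ℝ, 1 - ε₀ ≤ s → s ≤ t → t < 1 → Ψ₁'' s ≤ Ψ₁'' t)
    (hmonoM : ∀ s t : ℝ, -1 < s → s ≤ t → t ≤ -1 + ε₀ → Ψ₁'' t ≤ Ψ₁'' s) :
    ∀ ε : ℝ, 0 < ε → ε ≤ ε₀ → ∀ s ∈ Ioo (-1 : ℝ) 1,
      psi1eps Ψ₁ Ψ₁' Ψ₁'' ε s ≤ Ψ₁ s + ε ^ 3 / 6 := by
  intro ε hε hεε₀ s ⟨hs₁, hs₂⟩
  have hε₁ : ε ≤ 1 := hεε₀.trans hε₀.2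
  unfold psi1eps
  split_ifs with hright hleft
  · have hI := uIcc_of_le hright
    have hsub : uIcc (1 - ε) s ⊆ Ioo (-1) 1 :=
      hI ▸ fun x hx ↦ ⟨by linarith [hx.1], by linarith [hx.2]⟩
    have htaylor := taylor_quadratic_le_of_le_deriv2 (c := Ψ₁'' (1 - ε))
      (fun x hx ↦ hΨd x (hsub hx)) (fun x hx ↦ hΨd2 x (hsub hx))
      (fun x hx ↦ hmonoP _ x (by linarith) (hI ▸ hx).1 (hsub hx).2)
    have hcube : (s - (1 - ε)) ^ 3 ≤ ε ^ 3 := pow_le_pow_left₀ (by linarith) (by linarith) 3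
    linarith
  · have hI := uIcc_of_ge hleft
    have hsub : uIcc (-1 + ε) s ⊆ Ioo (-1) 1 :=
      hI ▸ fun x hx ↦ ⟨by linarith [hx.1], by linarith [hx.2]⟩
    have htaylor := taylor_quadratic_le_of_le_deriv2 (c := Ψ₁'' (-1 + ε))
      (fun x hx ↦ hΨd x (hsub hx)) (fun x hx ↦ hΨd2 x (hsub hx))
      (fun x hx ↦ hmonoM x _ (hsub hx).1 (hI ▸ hx).2 (by linarith))
    have hcube : |s - (-1 + ε)| ^ 3 ≤ ε ^ 3 :=
      pow_le_pow_left₀ (abs_nonneg _) (abs_le.2 ⟨by linarith, by linarith⟩) 3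
    rw [show ε - 1 = -1 + ε by ring]
    linarith
  · linarith [pow_pos hε 3]

/-- If `Ψ₁″` is non-decreasing on `[1-ε₀,1)` and non-increasing on
`(-1,-1+ε₀]`, then `Ψ_{1,ε}(s) ≤ Ψ₁(s) + ε³/6` for all `ε ∈ (0,ε₀]` and `s ∈ (-1,1)`. -/
theorem stmt_5
    (Ψ₁ Ψ₁' Ψ₁'' : ℝ → ℝ)
    (hΨd : ∀ s ∈ Ioo (-1 : ℝ) 1, HasDerivAt Ψ₁ (Ψ₁' s) s)
    (hΨd2 : ∀ s ∈ Ioo (-1 : ℝ) 1, HasDerivAt Ψ₁' (Ψ₁'' s) s)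
    (hΨ''cont : ContinuousOn Ψ₁'' (Ioo (-1 : ℝ) 1))
    (ε₀ : ℝ) (hε₀ : ε₀ ∈ Ioc (0 : ℝ) 1)
    (hmonoP : ∀ s t : ℝ, 1 - ε₀ ≤ s → s ≤ t → t < 1 → Ψ₁'' s ≤ Ψ₁'' t)
    (hmonoM : ∀ s t : ℝ, -1 < s → s ≤ t → t ≤ -1 + ε₀ → Ψ₁'' t ≤ Ψ₁'' s) :
    ∀ ε : ℝ, 0 < ε → ε ≤ ε₀ → ∀ s ∈ Ioo (-1 : ℝ) 1,
      psi1eps Ψ₁ Ψ₁' Ψ₁'' ε s ≤ Ψ₁ s + ε ^ 3 / 6 :=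
  stmt_5_general Ψ₁ Ψ₁' Ψ₁'' hΨd hΨd2 ε₀ hε₀ hmonoP hmonoM
end

section
/- Let Ψ = Ψ₁ + Ψ₂ with Ψ₁ ∈ C²((−1,1)) and Ψ₂ ∈ C²([−1,1]), let A > 0, c₀ > 0, and let α ≥ 0 be a real number such that A Ψ″(s) + α ≥ c₀ for all s ∈ (−1,1). Then for every ε ∈ (0,1), the regularized potential Ψ_ε := Ψ_{1,ε} + Ψ_{2,ε} satisfies A Ψ_ε″(s) + α ≥ c₀ for all s ∈ ℝ. -/
open Set

/-- Second derivative of the regularization `Ψ_{1,ε}` of `Ψ₁ ∈ C²((-1,1))`. -/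
noncomputable def psi1epsD2 (Ψ₁'' : ℝ → ℝ) (ε s : ℝ) : ℝ :=
  if 1 - ε ≤ s then Ψ₁'' (1 - ε) + (s - (1 - ε))
  else if s ≤ -1 + ε then Ψ₁'' (-1 + ε) + |s - (ε - 1)|
  else Ψ₁'' s

/-- Second derivative of the regularization `Ψ_{2,ε}` of `Ψ₂ ∈ C²([-1,1])`. -/
noncomputable def psi2epsD2 (Ψ₂'' : ℝ → ℝ) (ε s : ℝ) : ℝ :=
  if 1 - ε ≤ s then Ψ₂'' (1 - ε)
  else if s ≤ -1 + ε then Ψ₂'' (-1 + ε)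
  else Ψ₂'' s

/-- If `A Ψ″(s) + α ≥ c₀` on `(-1,1)` for `Ψ = Ψ₁ + Ψ₂`, then for every
`ε ∈ (0,1)` the regularized potential `Ψ_ε = Ψ_{1,ε} + Ψ_{2,ε}` satisfies
`A Ψ_ε″(s) + α ≥ c₀` for all `s ∈ ℝ`. -/
theorem stmt_7
    (Ψ₁ Ψ₁' Ψ₁'' Ψ₂ Ψ₂' Ψ₂'' : ℝ → ℝ)
    (hΨ₁d : ∀ s ∈ Ioo (-1 : ℝ) 1, HasDerivAt Ψ₁ (Ψ₁' s) s)
    (hΨ₁d2 : ∀ s ∈ Ioo (-1 : ℝ) 1, HasDerivAt Ψ₁' (Ψ₁'' s) s)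
    (hΨ₁''cont : ContinuousOn Ψ₁'' (Ioo (-1 : ℝ) 1))
    (hΨ₂d : ∀ s ∈ Icc (-1 : ℝ) 1, HasDerivWithinAt Ψ₂ (Ψ₂' s) (Icc (-1 : ℝ) 1) s)
    (hΨ₂d2 : ∀ s ∈ Icc (-1 : ℝ) 1, HasDerivWithinAt Ψ₂' (Ψ₂'' s) (Icc (-1 : ℝ) 1) s)
    (hΨ₂''cont : ContinuousOn Ψ₂'' (Icc (-1 : ℝ) 1))
    (A α c₀ : ℝ) (hA : 0 < A) (hα : 0 ≤ α) (hc₀ : 0 < c₀)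
    (hconvex : ∀ s ∈ Ioo (-1 : ℝ) 1, c₀ ≤ A * (Ψ₁'' s + Ψ₂'' s) + α) :
    ∀ ε : ℝ, 0 < ε → ε < 1 → ∀ s : ℝ,
      c₀ ≤ A * (psi1epsD2 Ψ₁'' ε s + psi2epsD2 Ψ₂'' ε s) + α := by
  intro ε hε hε1 s
  unfold psi1epsD2 psi2epsD2
  split_ifs with h1 h2
  · have h := hconvex (1 - ε) ⟨by linarith, by linarith⟩
    nlinarith
  · have h := hconvex (-1 + ε) ⟨by linarith, by linarith⟩
    have := abs_nonneg (s - (ε - 1))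
    nlinarith
  · exact hconvex s ⟨by linarith, by linarith⟩
end

section
/- Let Ψ = Ψ₁ + Ψ₂ with Ψ₁ ∈ C²((−1,1)) and Ψ₂ ∈ C²([−1,1]), and suppose there is k ∈ ℝ such that Ψ″(s) ≥ k for all s ∈ (−1,1). Let ε₀ ∈ (0,1]. Then there exist constants k₁ > 0 and k₂ ∈ ℝ, independent of ε, such that for every ε ∈ (0,ε₀] the regularized potential Ψ_ε := Ψ_{1,ε} + Ψ_{2,ε} satisfies Ψ_ε(s) ≥ k₁|s|³ − k₂ for all s ∈ ℝ. -/
open Set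

/-- The regularization `Ψ_{2,ε}` of a regular potential `Ψ₂ ∈ C²([-1,1])`. -/
noncomputable def psi2eps (Ψ Ψ' Ψ'' : ℝ → ℝ) (ε s : ℝ) : ℝ :=
  if 1 - ε ≤ s then
    Ψ (1 - ε) + Ψ' (1 - ε) * (s - (1 - ε)) + (1 / 2) * Ψ'' (1 - ε) * (s - (1 - ε)) ^ 2
  else if s ≤ -1 + ε then
    Ψ (-1 + ε) + Ψ' (-1 + ε) * (s - (ε - 1)) + (1 / 2) * Ψ'' (-1 + ε) * (s - (ε - 1)) ^ 2
  else Ψ s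

/-!
Since `Ψ'' ≥ k`, the function `Ψ - k s² / 2` is convex on `(-1,1)`, so `Ψ` lies above its
second-order Taylor polynomial at any point `c` with `Ψ''(c)` replaced by `k`. Expanding at `0`
bounds `Ψ` below on `(-1,1)`; expanding at `0` and at `a` and adding shows that `Ψ'` is bounded
below on `[0,1)` and above on `(-1,0]`. Beyond `±(1-ε)`, `Ψ_ε` is the second-order Taylor
polynomial of `Ψ` at `±(1-ε)` plus `|s ∓ (1-ε)|³/6`; with these bounds, which do not depend on `ε`,
its constant and linear terms are controlled and the cubic term dominates.
-/

section SecondDerivativeBound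

variable {D : Set ℝ} {F F' F'' : ℝ → ℝ} {k c x : ℝ}

theorem taylor_le_of_deriv2_ge (hD : Convex ℝ D) (hDo : IsOpen D)
    (hF : ∀ x ∈ D, HasDerivAt F (F' x) x) (hF' : ∀ x ∈ D, HasDerivAt F' (F'' x) x)
    (hk : ∀ x ∈ D, k ≤ F'' x) (hc : c ∈ D) (hx : x ∈ D) :
    F c + F' c * (x - c) + k / 2 * (x - c) ^ 2 ≤ F x := by
  set H : ℝ → ℝ := fun x => F x - F c - F' c * (x - c) - k / 2 * (x - c) ^ 2
  have hlin (a : ℝ) (x : ℝ) : HasDerivAt (fun x => a * (x - c)) a x := by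
    simpa using ((hasDerivAt_id x).sub_const c).const_mul a
  have hH : ∀ x ∈ D, HasDerivAt H (F' x - F' c - k * (x - c)) x := fun x hx => by
    have hsq : HasDerivAt (fun x => k / 2 * (x - c) ^ 2) (k * (x - c)) x :=
      ((((hasDerivAt_id x).sub_const c).fun_pow 2).const_mul (k / 2)).congr_deriv (by simp; ring)
    exact (((hF x hx).sub_const (F c)).fun_sub (hlin (F' c) x)).fun_sub hsq
  have hH' : ∀ x ∈ D, HasDerivAt (fun x => F' x - F' c - k * (x - c)) (F'' x - k) x :=
    fun x hx => by simpa using ((hF' x hx).sub_const (F' c)).fun_sub (hlin k x)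
  have hconv : ConvexOn ℝ D H := by
    refine convexOn_of_hasDerivWithinAt2_nonneg (f' := fun x => F' x - F' c - k * (x - c))
      (f'' := fun x => F'' x - k) hD (HasDerivAt.continuousOn hH) ?_ ?_ ?_ <;>
      rw [hDo.interior_eq]
    · exact fun x hx => (hH x hx).hasDerivWithinAt
    · exact fun x hx => (hH' x hx).hasDerivWithinAt
    · exact fun x hx => sub_nonneg.2 (hk x hx)
  have hmin : IsMinOn H D c := by
    refine hconv.isMinOn_of_rightDeriv_eq_zero (by rwa [hDo.interior_eq]) ?_
    refine ((hH c hc).hasDerivWithinAt.derivWithin (uniqueDiffWithinAt_Ioi c)).trans ?_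
    ring
  have h := hmin hx
  simp only [mem_ofPred_eq, H, sub_self, mul_zero, ne_eq, OfNat.ofNat_ne_zero, not_false_eq_true,
    zero_pow] at h
  linarith

theorem deriv_add_mul_le_of_deriv2_ge (hD : Convex ℝ D) (hDo : IsOpen D)
    (hF : ∀ x ∈ D, HasDerivAt F (F' x) x) (hF' : ∀ x ∈ D, HasDerivAt F' (F'' x) x)
    (hk : ∀ x ∈ D, k ≤ F'' x) (hc : c ∈ D) (hx : x ∈ D) (hcx : c ≤ x) :
    F' c + k * (x - c) ≤ F' x := by
  rcases hcx.eq_or_lt with rfl | hlt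
  · simp
  have h₁ := taylor_le_of_deriv2_ge hD hDo hF hF' hk hc hx
  have h₂ := taylor_le_of_deriv2_ge hD hDo hF hF' hk hx hc
  have : (F' c + k * (x - c)) * (x - c) ≤ F' x * (x - c) := by nlinarith
  exact le_of_mul_le_mul_right this (sub_pos.2 hlt)

end SecondDerivativeBound

section UnitInterval

variable {F F' F'' : ℝ → ℝ} {k a s x : ℝ}

theorem sub_abs_sub_le_of_deriv2_ge (hF : ∀ x ∈ Ioo (-1 : ℝ) 1, HasDerivAt F (F' x) x)
    (hF' : ∀ x ∈ Ioo (-1 : ℝ) 1, HasDerivAt F' (F'' x) x) (hk : ∀ x ∈ Ioo (-1 : ℝ) 1, k ≤ F'' x)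
    (hx : x ∈ Ioo (-1 : ℝ) 1) :
    F 0 - |F' 0| - |k| / 2 ≤ F x := by
  have h := taylor_le_of_deriv2_ge (convex_Ioo _ _) isOpen_Ioo hF hF' hk
    (by norm_num : (0 : ℝ) ∈ Ioo (-1 : ℝ) 1) hx
  have hx1 : |x| ≤ 1 := abs_le.2 ⟨hx.1.le, hx.2.le⟩
  have h₁ : |F' 0 * (x - 0)| ≤ |F' 0| := by
    rw [sub_zero, abs_mul]; exact mul_le_of_le_one_right (abs_nonneg _) hx1
  have h₂ : |k / 2 * (x - 0) ^ 2| ≤ |k| / 2 := by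
    rw [sub_zero, abs_mul, abs_div, abs_two, abs_pow]
    exact mul_le_of_le_one_right (by positivity) (pow_le_one₀ (abs_nonneg x) hx1)
  linarith [neg_abs_le (F' 0 * (x - 0)), neg_abs_le (k / 2 * (x - 0) ^ 2)]

theorem neg_mul_abs_sub_le_of_deriv2_ge (hF : ∀ x ∈ Ioo (-1 : ℝ) 1, HasDerivAt F (F' x) x)
    (hF' : ∀ x ∈ Ioo (-1 : ℝ) 1, HasDerivAt F' (F'' x) x) (hk : ∀ x ∈ Ioo (-1 : ℝ) 1, k ≤ F'' x)
    (ha : a ∈ Ioo (-1 : ℝ) 1) (has : 0 ≤ a ∧ a ≤ s ∨ s ≤ a ∧ a ≤ 0) :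
    -(|F' 0| + |k|) * |s - a| ≤ F' a * (s - a) := by
  have h0 : (0 : ℝ) ∈ Ioo (-1 : ℝ) 1 := by norm_num
  have hmono {c x : ℝ} := deriv_add_mul_le_of_deriv2_ge (c := c) (x := x) (convex_Ioo (-1 : ℝ) 1)
    isOpen_Ioo hF hF' hk
  rcases has with ⟨h0a, has⟩ | ⟨hsa, ha0⟩
  · have hk' : -|k| ≤ k * (a - 0) := by
      rw [sub_zero]; nlinarith [neg_abs_le k, abs_nonneg k, ha.2]
    have hA : -(|F' 0| + |k|) ≤ F' a := by
      linarith [hmono h0 ha h0a, neg_abs_le (F' 0)]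
    rw [abs_of_nonneg (sub_nonneg.2 has)]
    exact mul_le_mul_of_nonneg_right hA (sub_nonneg.2 has)
  · have hk' : -|k| ≤ k * (0 - a) := by
      nlinarith [neg_abs_le k, abs_nonneg k, ha.1]
    have hA : F' a ≤ |F' 0| + |k| := by
      linarith [hmono ha h0 ha0, le_abs_self (F' 0)]
    rw [abs_of_nonpos (sub_nonpos.2 hsa)]
    nlinarith [mul_le_mul_of_nonneg_right hA (sub_nonneg.2 hsa)]

end UnitInterval

theorem exists_cubic_lower_bound (A k : ℝ) :
    ∃ C, ∀ y : ℝ, 0 ≤ y → 1 / 48 * (y + 1) ^ 3 - C ≤ y ^ 3 / 6 - A * y + k / 2 * y ^ 2 := by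
  refine ⟨1 / 12 + |A| ^ 2 / 2 + 22 * (|k| / 2 + 1 / 2) ^ 3, fun y hy => ?_⟩
  set B := |k| / 2
  have hB : 0 < B + 1 / 2 := by positivity
  have hAy : A * y ≤ |A| * y := mul_le_mul_of_nonneg_right (le_abs_self A) hy
  have hky : -B * y ^ 2 ≤ k / 2 * y ^ 2 :=
    mul_le_mul_of_nonneg_right (by simp only [B]; linarith [neg_abs_le k]) (sq_nonneg y)
  nlinarith [sq_nonneg (|A| - y), mul_nonneg (by linarith : (0 : ℝ) ≤ y + 1) (sq_nonneg (y - 1)),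
    mul_nonneg hy (sq_nonneg (y - 8 * (B + 1 / 2))),
    mul_nonneg hB.le (sq_nonneg (y - 8 * (B + 1 / 2))), pow_pos hB 3]

noncomputable def cubicTaylorExtension (F F' F'' : ℝ → ℝ) (a s : ℝ) : ℝ :=
  F a + F' a * (s - a) + 1 / 2 * F'' a * (s - a) ^ 2 + 1 / 6 * |s - a| ^ 3

theorem cubicTaylorExtension_lower_bound {F F' F'' : ℝ → ℝ} {a s m A k C : ℝ}
    (hC : ∀ y : ℝ, 0 ≤ y → 1 / 48 * (y + 1) ^ 3 - C ≤ y ^ 3 / 6 - A * y + k / 2 * y ^ 2)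
    (ha : |a| ≤ 1) (hm : m ≤ F a) (hA : -A * |s - a| ≤ F' a * (s - a)) (hk : k ≤ F'' a) :
    1 / 48 * |s| ^ 3 - (C - m) ≤ cubicTaylorExtension F F' F'' a s := by
  set y := |s - a|
  have hs : |s| ≤ y + 1 := by
    calc |s| = |(s - a) + a| := by rw [sub_add_cancel]
      _ ≤ y + |a| := abs_add_le _ _
      _ ≤ y + 1 := by linarith
  have hcube : |s| ^ 3 ≤ (y + 1) ^ 3 := pow_le_pow_left₀ (abs_nonneg s) hs 3
  have hsq : k * y ^ 2 ≤ F'' a * (s - a) ^ 2 := by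
    rw [sq_abs]; exact mul_le_mul_of_nonneg_right hk (sq_nonneg _)
  have := hC y (abs_nonneg _)
  unfold cubicTaylorExtension
  linarith

section Regularization

variable {Ψ₁ Ψ₁' Ψ₁'' Ψ₂ Ψ₂' Ψ₂'' : ℝ → ℝ} {ε s : ℝ}

theorem psi1eps_add_psi2eps_of_one_sub_le (h : 1 - ε ≤ s) :
    psi1eps Ψ₁ Ψ₁' Ψ₁'' ε s + psi2eps Ψ₂ Ψ₂' Ψ₂'' ε s =
      cubicTaylorExtension (Ψ₁ + Ψ₂) (Ψ₁' + Ψ₂') (Ψ₁'' + Ψ₂'') (1 - ε) s := by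
  simp only [psi1eps, psi2eps, if_pos h, cubicTaylorExtension, Pi.add_apply,
    abs_of_nonneg (sub_nonneg.2 h)]
  ring

theorem psi1eps_add_psi2eps_of_le_neg_one_add (h₁ : s < 1 - ε) (h₂ : s ≤ -1 + ε) :
    psi1eps Ψ₁ Ψ₁' Ψ₁'' ε s + psi2eps Ψ₂ Ψ₂' Ψ₂'' ε s =
      cubicTaylorExtension (Ψ₁ + Ψ₂) (Ψ₁' + Ψ₂') (Ψ₁'' + Ψ₂'') (-1 + ε) s := by
  simp only [psi1eps, psi2eps, if_neg (not_le.2 h₁), if_pos h₂, cubicTaylorExtension,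
    Pi.add_apply, show ε - 1 = -1 + ε by ring]
  ring

theorem psi1eps_add_psi2eps_of_mem_Ioo (h₁ : s < 1 - ε) (h₂ : -1 + ε < s) :
    psi1eps Ψ₁ Ψ₁' Ψ₁'' ε s + psi2eps Ψ₂ Ψ₂' Ψ₂'' ε s = (Ψ₁ + Ψ₂) s := by
  simp only [psi1eps, psi2eps, if_neg (not_le.2 h₁), if_neg (not_le.2 h₂), Pi.add_apply]

end Regularization

theorem stmt_8_general
    (Ψ₁ Ψ₁' Ψ₁'' Ψ₂ Ψ₂' Ψ₂'' : ℝ → ℝ)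
    (hΨ₁d : ∀ s ∈ Ioo (-1 : ℝ) 1, HasDerivAt Ψ₁ (Ψ₁' s) s)
    (hΨ₁d2 : ∀ s ∈ Ioo (-1 : ℝ) 1, HasDerivAt Ψ₁' (Ψ₁'' s) s)
    (hΨ₂d : ∀ s ∈ Icc (-1 : ℝ) 1, HasDerivWithinAt Ψ₂ (Ψ₂' s) (Icc (-1 : ℝ) 1) s)
    (hΨ₂d2 : ∀ s ∈ Icc (-1 : ℝ) 1, HasDerivWithinAt Ψ₂' (Ψ₂'' s) (Icc (-1 : ℝ) 1) s)
    (k : ℝ) (hk : ∀ s ∈ Ioo (-1 : ℝ) 1, k ≤ Ψ₁'' s + Ψ₂'' s)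
    (ε₀ : ℝ) (hε₀ : ε₀ ∈ Ioc (0 : ℝ) 1) :
    ∃ k₁ : ℝ, 0 < k₁ ∧ ∃ k₂ : ℝ,
      ∀ ε : ℝ, 0 < ε → ε ≤ ε₀ → ∀ s : ℝ,
        k₁ * |s| ^ 3 - k₂ ≤ psi1eps Ψ₁ Ψ₁' Ψ₁'' ε s + psi2eps Ψ₂ Ψ₂' Ψ₂'' ε s := by
  have hF : ∀ x ∈ Ioo (-1 : ℝ) 1, HasDerivAt (Ψ₁ + Ψ₂) ((Ψ₁' + Ψ₂') x) x := fun x hx =>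
    (hΨ₁d x hx).add ((hΨ₂d x (Ioo_subset_Icc_self hx)).hasDerivAt (Icc_mem_nhds hx.1 hx.2))
  have hF' : ∀ x ∈ Ioo (-1 : ℝ) 1, HasDerivAt (Ψ₁' + Ψ₂') ((Ψ₁'' + Ψ₂'') x) x := fun x hx =>
    (hΨ₁d2 x hx).add ((hΨ₂d2 x (Ioo_subset_Icc_self hx)).hasDerivAt (Icc_mem_nhds hx.1 hx.2))
  have hm {x : ℝ} := sub_abs_sub_le_of_deriv2_ge (x := x) hF hF' hk
  have hA {a s : ℝ} := neg_mul_abs_sub_le_of_deriv2_ge (a := a) (s := s) hF hF' hk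
  obtain ⟨C, hC⟩ := exists_cubic_lower_bound (|(Ψ₁' + Ψ₂') 0| + |k|) k
  refine ⟨1 / 48, by norm_num, C - ((Ψ₁ + Ψ₂) 0 - |(Ψ₁' + Ψ₂') 0| - |k| / 2),
    fun ε hε hεε₀ s => ?_⟩
  have hε₁ : ε ≤ 1 := hεε₀.trans hε₀.2
  by_cases h₁ : 1 - ε ≤ s
  · have ha : 1 - ε ∈ Ioo (-1 : ℝ) 1 := ⟨by linarith, by linarith⟩
    rw [psi1eps_add_psi2eps_of_one_sub_le h₁]
    exact cubicTaylorExtension_lower_bound hC (abs_le.2 ⟨by linarith, by linarith⟩) (hm ha)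
      (hA ha (Or.inl ⟨by linarith, h₁⟩)) (hk _ ha)
  by_cases h₂ : s ≤ -1 + ε
  · have ha : -1 + ε ∈ Ioo (-1 : ℝ) 1 := ⟨by linarith, by linarith⟩
    rw [psi1eps_add_psi2eps_of_le_neg_one_add (not_le.1 h₁) h₂]
    exact cubicTaylorExtension_lower_bound hC (abs_le.2 ⟨by linarith, by linarith⟩) (hm ha)
      (hA ha (Or.inr ⟨h₂, by linarith⟩)) (hk _ ha)
  · have hs : s ∈ Ioo (-1 : ℝ) 1 := ⟨by linarith, by linarith⟩
    rw [psi1eps_add_psi2eps_of_mem_Ioo (not_le.1 h₁) (not_le.1 h₂)]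
    have hcube : |s| ^ 3 ≤ 1 := pow_le_one₀ (abs_nonneg s) (abs_le.2 ⟨hs.1.le, hs.2.le⟩)
    linarith [hm hs, hC 0 le_rfl]

/-- If `Ψ″ = Ψ₁″ + Ψ₂″ ≥ k` on `(-1,1)`, then there exist `k₁ > 0` and
`k₂ ∈ ℝ`, independent of `ε`, such that for every `ε ∈ (0,ε₀]` the regularized potential
`Ψ_ε = Ψ_{1,ε} + Ψ_{2,ε}` satisfies `Ψ_ε(s) ≥ k₁|s|³ - k₂` for all `s ∈ ℝ`. -/
theorem stmt_8
    (Ψ₁ Ψ₁' Ψ₁'' Ψ₂ Ψ₂' Ψ₂'' : ℝ → ℝ)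
    (hΨ₁d : ∀ s ∈ Ioo (-1 : ℝ) 1, HasDerivAt Ψ₁ (Ψ₁' s) s)
    (hΨ₁d2 : ∀ s ∈ Ioo (-1 : ℝ) 1, HasDerivAt Ψ₁' (Ψ₁'' s) s)
    (hΨ₁''cont : ContinuousOn Ψ₁'' (Ioo (-1 : ℝ) 1))
    (hΨ₂d : ∀ s ∈ Icc (-1 : ℝ) 1, HasDerivWithinAt Ψ₂ (Ψ₂' s) (Icc (-1 : ℝ) 1) s)
    (hΨ₂d2 : ∀ s ∈ Icc (-1 : ℝ) 1, HasDerivWithinAt Ψ₂' (Ψ₂'' s) (Icc (-1 : ℝ) 1) s)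
    (hΨ₂''cont : ContinuousOn Ψ₂'' (Icc (-1 : ℝ) 1))
    (k : ℝ) (hk : ∀ s ∈ Ioo (-1 : ℝ) 1, k ≤ Ψ₁'' s + Ψ₂'' s)
    (ε₀ : ℝ) (hε₀ : ε₀ ∈ Ioc (0 : ℝ) 1) :
    ∃ k₁ : ℝ, 0 < k₁ ∧ ∃ k₂ : ℝ,
      ∀ ε : ℝ, 0 < ε → ε ≤ ε₀ → ∀ s : ℝ,
        k₁ * |s| ^ 3 - k₂ ≤ psi1eps Ψ₁ Ψ₁' Ψ₁'' ε s + psi2eps Ψ₂ Ψ₂' Ψ₂'' ε s :=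
  stmt_8_general Ψ₁ Ψ₁' Ψ₁'' Ψ₂ Ψ₂' Ψ₂'' hΨ₁d hΨ₁d2 hΨ₂d hΨ₂d2 k hk ε₀ hε₀
end

section
/- Let m ∈ C⁰([−1,1]) satisfy m(s) > 0 for |s| < 1 and m(±1) = 0, and suppose that for some ε₀ ∈ (0,1], m is non-increasing on [1−ε₀,1] and non-decreasing on [−1,−1+ε₀]. Let c₇ > 0 and let P ∈ C⁰([−1,1]) be non-negative with √(P(s)) ≤ c₇ m(s) for all s ∈ [−1,−1+ε₀] ∪ [1−ε₀,1]. Then there exists a constant C > 0, independent of ε, such that for every ε ∈ (0,ε₀] and all s ∈ ℝ: |√(P_ε(s)) M_ε′(s)| ≤ c₇|s| + C. -/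
open Set MeasureTheory

/-!
Write `m_ε = m ∘ clip ε`, where `clip ε` clamps to `[-1 + ε, 1 - ε]`; the reflection `s ↦ -s`
exchanges the two ends, so it suffices to take `s ≥ 0`. On `[0, 1 - ε₀]` the mobility is at least
its positive minimum `μ` there, so `|M_ε′| ≤ (1 - ε₀)/μ`, while `√P_ε` is bounded by `max √P`.
Beyond `1 - ε₀` the truncated mobility is non-increasing, so
`∫_{1-ε₀}^s 1/m_ε ≤ (s - (1 - ε₀))/m_ε(s)`, and the denominator cancels against
`√P_ε(s) ≤ c₇ m_ε(s)`.
-/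

/-- The truncated (non-degenerate) mobility `m_ε`. -/
noncomputable def mEps (m : ℝ → ℝ) (ε s : ℝ) : ℝ :=
  if 1 - ε ≤ s then m (1 - ε) else if s ≤ -1 + ε then m (-1 + ε) else m s

/-- The derivative `M_ε′` of the approximate entropy, `M_ε′(s) = ∫₀^s 1/m_ε(r) dr`
(so that `m_ε M_ε″ = 1`, `M_ε(0) = M_ε′(0) = 0`). -/
noncomputable def mEpsEntropyPrime (m : ℝ → ℝ) (ε s : ℝ) : ℝ :=
  ∫ r in (0 : ℝ)..s, (mEps m ε r)⁻¹

/-- The truncated nonlinearity `P_ε`. -/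
noncomputable def pEps (P : ℝ → ℝ) (ε s : ℝ) : ℝ :=
  if 1 - ε ≤ s then P (1 - ε) else if s ≤ -1 + ε then P (-1 + ε) else P s

def clip (ε s : ℝ) : ℝ := max (-1 + ε) (min (1 - ε) s)

section Clip

variable {ε : ℝ}

lemma clip_mem_Icc (hε : ε ≤ 1) (s : ℝ) : clip ε s ∈ Icc (-1 + ε) (1 - ε) :=
  ⟨le_max_left _ _, max_le (by linarith) (min_le_left _ _)⟩

lemma clip_mem_Icc_neg_one_one (hε0 : 0 ≤ ε) (hε : ε ≤ 1) (s : ℝ) : clip ε s ∈ Icc (-1) 1 :=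
  Icc_subset_Icc (by linarith) (by linarith) (clip_mem_Icc hε s)

lemma clip_mem_Ioo (hε0 : 0 < ε) (hε : ε ≤ 1) (s : ℝ) : clip ε s ∈ Ioo (-1) 1 :=
  Icc_subset_Ioo (by linarith) (by linarith) (clip_mem_Icc hε s)

lemma clip_monotone : Monotone (clip ε) :=
  fun _ _ h => max_le_max le_rfl (min_le_min le_rfl h)

lemma continuous_clip : Continuous (clip ε) :=
  continuous_const.max (continuous_const.min continuous_id)

lemma clip_of_mem {s : ℝ} (hs : s ∈ Icc (-1 + ε) (1 - ε)) : clip ε s = s := by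
  rw [clip, min_eq_right hs.2, max_eq_right hs.1]

lemma clip_neg (hε : ε ≤ 1) (s : ℝ) : clip ε (-s) = -clip ε s := by
  simp only [clip, max_def, min_def]
  split_ifs <;> linarith

end Clip

section Truncation

variable {m : ℝ → ℝ} {ε : ℝ}

lemma mEps_eq_comp_clip (hε : ε ≤ 1) (m : ℝ → ℝ) (s : ℝ) : mEps m ε s = m (clip ε s) := by
  unfold mEps clip
  split_ifs with h1 h2
  · rw [min_eq_left h1, max_eq_right (by linarith)]
  · rw [min_eq_right (by linarith), max_eq_left h2]
  · rw [min_eq_right (by linarith), max_eq_right (by linarith)]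

lemma pEps_eq_mEps : pEps = mEps := rfl

lemma mEps_neg (hε : ε ≤ 1) (s : ℝ) : mEps m ε (-s) = mEps (fun x => m (-x)) ε s := by
  rw [mEps_eq_comp_clip hε, mEps_eq_comp_clip hε, clip_neg hε]

lemma mEps_pos (hm : ∀ s ∈ Ioo (-1 : ℝ) 1, 0 < m s) (hε0 : 0 < ε) (hε : ε ≤ 1) (s : ℝ) :
    0 < mEps m ε s := by
  rw [mEps_eq_comp_clip hε]
  exact hm _ (clip_mem_Ioo hε0 hε s)

lemma continuous_mEps (hm : ContinuousOn m (Icc (-1 : ℝ) 1)) (hε0 : 0 ≤ ε) (hε : ε ≤ 1) :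
    Continuous (mEps m ε) := by
  rw [funext (mEps_eq_comp_clip hε m)]
  exact hm.comp_continuous continuous_clip (clip_mem_Icc_neg_one_one hε0 hε)

lemma intervalIntegrable_inv_mEps (hmcont : ContinuousOn m (Icc (-1 : ℝ) 1))
    (hmpos : ∀ s ∈ Ioo (-1 : ℝ) 1, 0 < m s) (hε0 : 0 < ε) (hε : ε ≤ 1) (a b : ℝ) :
    IntervalIntegrable (fun r => (mEps m ε r)⁻¹) volume a b :=
  ((continuous_mEps hmcont hε0.le hε).inv₀
    fun r => (mEps_pos hmpos hε0 hε r).ne').intervalIntegrable a b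

lemma mEpsEntropyPrime_neg (hε : ε ≤ 1) (s : ℝ) :
    mEpsEntropyPrime m ε (-s) = -mEpsEntropyPrime (fun x => m (-x)) ε s := by
  simp only [mEpsEntropyPrime, ← mEps_neg hε,
    intervalIntegral.integral_comp_neg fun r => (mEps m ε r)⁻¹, neg_zero,
    intervalIntegral.integral_symm (-s) 0]

end Truncation

lemma abs_intervalIntegral_inv_le {f : ℝ → ℝ} {a b μ : ℝ} (hab : a ≤ b) (hμ : 0 < μ)
    (hf : ∀ x ∈ Ioc a b, μ ≤ f x) : |∫ x in a..b, (f x)⁻¹| ≤ (b - a) / μ := by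
  have := intervalIntegral.norm_integral_le_of_norm_le_const (a := a) (b := b)
    (C := μ⁻¹) (f := fun x => (f x)⁻¹) fun x hx => by
      rw [uIoc_of_le hab] at hx
      have hfx := hf x hx
      rw [Real.norm_eq_abs, abs_of_pos (inv_pos.2 (hμ.trans_le hfx))]
      exact inv_anti₀ hμ hfx
  rwa [Real.norm_eq_abs, abs_of_nonneg (sub_nonneg.2 hab), inv_mul_eq_div] at this

section Bound

variable {m P : ℝ → ℝ} {ε ε₀ μ B c : ℝ}

lemma sqrt_pEps_le (hε0 : 0 ≤ ε) (hε : ε ≤ 1) (hB : ∀ s ∈ Icc (-1 : ℝ) 1, √(P s) ≤ B)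
    (s : ℝ) : √(pEps P ε s) ≤ B := by
  rw [pEps_eq_mEps, mEps_eq_comp_clip hε]
  exact hB _ (clip_mem_Icc_neg_one_one hε0 hε s)

lemma abs_mEpsEntropyPrime_le (hε : ε ≤ ε₀) (hμ : 0 < μ)
    (hmμ : ∀ s ∈ Icc 0 (1 - ε₀), μ ≤ m s) {t : ℝ} (ht0 : 0 ≤ t) (ht : t ≤ 1 - ε₀) :
    |mEpsEntropyPrime m ε t| ≤ (1 - ε₀) / μ := by
  have hε1 : ε ≤ 1 := by linarith
  calc |mEpsEntropyPrime m ε t| ≤ (t - 0) / μ :=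
        abs_intervalIntegral_inv_le ht0 hμ fun x hx => by
          have hx' : x ∈ Icc 0 (1 - ε₀) := ⟨hx.1.le, hx.2.trans ht⟩
          rw [mEps_eq_comp_clip hε1, clip_of_mem ⟨by linarith [hx'.1], by linarith [hx'.2]⟩]
          exact hmμ x hx'
    _ ≤ (1 - ε₀) / μ := div_le_div_of_nonneg_right (by linarith) hμ.le

lemma sqrt_pEps_mul_abs_integral_tail_le (hmpos : ∀ s ∈ Ioo (-1 : ℝ) 1, 0 < m s) (hε0 : 0 < ε)
    (hε : ε ≤ ε₀) (hε₀ : ε₀ ≤ 1) (hmono : AntitoneOn m (Icc (1 - ε₀) 1))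
    (hPm : ∀ s ∈ Icc (1 - ε₀) 1, √(P s) ≤ c * m s) {s : ℝ} (hs : 1 - ε₀ ≤ s) :
    √(pEps P ε s) * |∫ r in (1 - ε₀)..s, (mEps m ε r)⁻¹| ≤ c * (s - (1 - ε₀)) := by
  have hε1 : ε ≤ 1 := hε.trans hε₀
  have hclip : ∀ x, 1 - ε₀ ≤ x → clip ε x ∈ Icc (1 - ε₀) 1 := fun x hx =>
    ⟨(clip_of_mem ⟨by linarith, by linarith⟩).symm.trans_le (clip_monotone hx),
      by linarith [(clip_mem_Icc hε1 x).2]⟩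
  have hms := mEps_pos hmpos hε0 hε1 s
  have hint : |∫ r in (1 - ε₀)..s, (mEps m ε r)⁻¹| ≤ (s - (1 - ε₀)) / mEps m ε s :=
    abs_intervalIntegral_inv_le hs hms fun x hx => by
      simp only [mEps_eq_comp_clip hε1]
      exact hmono (hclip x hx.1.le) (hclip s hs) (clip_monotone hx.2)
  have hPs : √(pEps P ε s) ≤ c * mEps m ε s := by
    rw [pEps_eq_mEps, mEps_eq_comp_clip hε1, mEps_eq_comp_clip hε1]
    exact hPm _ (hclip s hs)
  calc √(pEps P ε s) * |∫ r in (1 - ε₀)..s, (mEps m ε r)⁻¹|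
      ≤ c * mEps m ε s * ((s - (1 - ε₀)) / mEps m ε s) :=
        mul_le_mul hPs hint (abs_nonneg _) ((Real.sqrt_nonneg _).trans hPs)
    _ = c * (s - (1 - ε₀)) := by field_simp

lemma abs_sqrt_pEps_mul_mEpsEntropyPrime_le_of_nonneg
    (hmcont : ContinuousOn m (Icc (-1 : ℝ) 1)) (hmpos : ∀ s ∈ Ioo (-1 : ℝ) 1, 0 < m s)
    (hε0 : 0 < ε) (hε : ε ≤ ε₀) (hε₀ : ε₀ ≤ 1) (hμ : 0 < μ)
    (hmμ : ∀ s ∈ Icc 0 (1 - ε₀), μ ≤ m s) (hmono : AntitoneOn m (Icc (1 - ε₀) 1))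
    (hB : ∀ s ∈ Icc (-1 : ℝ) 1, √(P s) ≤ B) (hPm : ∀ s ∈ Icc (1 - ε₀) 1, √(P s) ≤ c * m s)
    (hc : 0 ≤ c) {s : ℝ} (hs : 0 ≤ s) :
    |√(pEps P ε s) * mEpsEntropyPrime m ε s| ≤ c * s + B * ((1 - ε₀) / μ) := by
  have hε1 : ε ≤ 1 := hε.trans hε₀
  have hPB := sqrt_pEps_le hε0.le hε1 hB s
  have hB0 : 0 ≤ B := (Real.sqrt_nonneg _).trans hPB
  rw [abs_mul, abs_of_nonneg (Real.sqrt_nonneg _)]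
  rcases le_total s (1 - ε₀) with hsε₀ | hε₀s
  · calc √(pEps P ε s) * |mEpsEntropyPrime m ε s| ≤ B * ((1 - ε₀) / μ) :=
          mul_le_mul hPB (abs_mEpsEntropyPrime_le hε hμ hmμ hs hsε₀) (abs_nonneg _) hB0
      _ ≤ c * s + B * ((1 - ε₀) / μ) := le_add_of_nonneg_left (mul_nonneg hc hs)
  · have hsplit := intervalIntegral.integral_add_adjacent_intervals
      (intervalIntegrable_inv_mEps hmcont hmpos hε0 hε1 0 (1 - ε₀))
      (intervalIntegrable_inv_mEps hmcont hmpos hε0 hε1 (1 - ε₀) s)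
    rw [mEpsEntropyPrime, ← hsplit]
    calc √(pEps P ε s) * |(∫ r in 0..(1 - ε₀), (mEps m ε r)⁻¹)
          + ∫ r in (1 - ε₀)..s, (mEps m ε r)⁻¹|
        ≤ √(pEps P ε s) * |∫ r in 0..(1 - ε₀), (mEps m ε r)⁻¹|
          + √(pEps P ε s) * |∫ r in (1 - ε₀)..s, (mEps m ε r)⁻¹| := by
          rw [← mul_add]
          exact mul_le_mul_of_nonneg_left (abs_add_le _ _) (Real.sqrt_nonneg _)
      _ ≤ B * ((1 - ε₀) / μ) + c * (s - (1 - ε₀)) :=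
          add_le_add
            (mul_le_mul hPB (abs_mEpsEntropyPrime_le hε hμ hmμ (by linarith) le_rfl)
              (abs_nonneg _) hB0)
            (sqrt_pEps_mul_abs_integral_tail_le hmpos hε0 hε hε₀ hmono hPm hε₀s)
      _ ≤ c * s + B * ((1 - ε₀) / μ) := by nlinarith [mul_nonneg hc (sub_nonneg.2 hε₀)]

lemma abs_sqrt_pEps_mul_mEpsEntropyPrime_le
    (hmcont : ContinuousOn m (Icc (-1 : ℝ) 1)) (hmpos : ∀ s ∈ Ioo (-1 : ℝ) 1, 0 < m s)
    (hε0 : 0 < ε) (hε : ε ≤ ε₀) (hε₀ : ε₀ ≤ 1) (hμ : 0 < μ)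
    (hmμ : ∀ s ∈ Icc (-1 + ε₀) (1 - ε₀), μ ≤ m s) (hmonoP : AntitoneOn m (Icc (1 - ε₀) 1))
    (hmonoM : MonotoneOn m (Icc (-1) (-1 + ε₀))) (hB : ∀ s ∈ Icc (-1 : ℝ) 1, √(P s) ≤ B)
    (hPm : ∀ s ∈ Icc (-1 : ℝ) (-1 + ε₀) ∪ Icc (1 - ε₀) 1, √(P s) ≤ c * m s) (hc : 0 ≤ c)
    (s : ℝ) : |√(pEps P ε s) * mEpsEntropyPrime m ε s| ≤ c * |s| + B * ((1 - ε₀) / μ) := by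
  have hε1 : ε ≤ 1 := hε.trans hε₀
  rcases le_total 0 s with hs | hs
  · rw [abs_of_nonneg hs]
    exact abs_sqrt_pEps_mul_mEpsEntropyPrime_le_of_nonneg hmcont hmpos hε0 hε hε₀ hμ
      (fun x hx => hmμ x ⟨by linarith [hx.1], hx.2⟩) hmonoP hB
      (fun x hx => hPm x (Or.inr hx)) hc hs
  · obtain ⟨t, rfl⟩ : ∃ t, s = -t := ⟨-s, (neg_neg s).symm⟩
    have ht : 0 ≤ t := neg_nonpos.1 hs
    rw [abs_neg, abs_of_nonneg ht, pEps_eq_mEps, mEps_neg hε1, mEpsEntropyPrime_neg hε1,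
      mul_neg, abs_neg, ← pEps_eq_mEps]
    refine abs_sqrt_pEps_mul_mEpsEntropyPrime_le_of_nonneg ?_ ?_ hε0 hε hε₀ hμ ?_ ?_ ?_ ?_ hc ht
    · exact hmcont.comp continuous_neg.continuousOn fun x hx =>
        ⟨by linarith [hx.2], by linarith [hx.1]⟩
    · exact fun x hx => hmpos (-x) ⟨by linarith [hx.2], by linarith [hx.1]⟩
    · exact fun x hx => hmμ (-x) ⟨by linarith [hx.2], by linarith [hx.1]⟩
    · exact fun x hx y hy hxy => hmonoM ⟨by linarith [hy.2], by linarith [hy.1]⟩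
        ⟨by linarith [hx.2], by linarith [hx.1]⟩ (neg_le_neg hxy)
    · exact fun x hx => hB (-x) ⟨by linarith [hx.2], by linarith [hx.1]⟩
    · exact fun x hx => hPm (-x) (Or.inl ⟨by linarith [hx.2], by linarith [hx.1]⟩)

end Bound

theorem stmt_10_general
    (m P : ℝ → ℝ)
    (hmcont : ContinuousOn m (Icc (-1 : ℝ) 1))
    (hmpos : ∀ s ∈ Ioo (-1 : ℝ) 1, 0 < m s)
    (ε₀ : ℝ) (hε₀ : ε₀ ∈ Ioc (0 : ℝ) 1)
    (hmonoP : ∀ s t : ℝ, 1 - ε₀ ≤ s → s ≤ t → t ≤ 1 → m t ≤ m s)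
    (hmonoM : ∀ s t : ℝ, -1 ≤ s → s ≤ t → t ≤ -1 + ε₀ → m s ≤ m t)
    (c₇ : ℝ) (hc₇ : 0 < c₇)
    (hPcont : ContinuousOn P (Icc (-1 : ℝ) 1))
    (hPm : ∀ s ∈ Icc (-1 : ℝ) (-1 + ε₀) ∪ Icc (1 - ε₀) 1, Real.sqrt (P s) ≤ c₇ * m s) :
    ∃ C : ℝ, 0 < C ∧ ∀ ε : ℝ, 0 < ε → ε ≤ ε₀ → ∀ s : ℝ,
      |Real.sqrt (pEps P ε s) * mEpsEntropyPrime m ε s| ≤ c₇ * |s| + C := by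
  obtain ⟨hε₀pos, hε₀le⟩ := hε₀
  obtain ⟨μ, hμ, hmμ⟩ : ∃ μ, 0 < μ ∧ ∀ s ∈ Icc (-1 + ε₀) (1 - ε₀), μ ≤ m s :=
    isCompact_Icc.exists_forall_le' (hmcont.mono (Icc_subset_Icc (by linarith) (by linarith)))
      fun s hs => hmpos s ⟨by linarith [hs.1], by linarith [hs.2]⟩
  obtain ⟨B, hB⟩ := isCompact_Icc.bddAbove_image hPcont.sqrt
  have hPB : ∀ s ∈ Icc (-1 : ℝ) 1, √(P s) ≤ B := fun s hs => hB (mem_image_of_mem _ hs)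
  have hB0 : 0 ≤ B := (Real.sqrt_nonneg _).trans (hPB 0 ⟨by norm_num, by norm_num⟩)
  refine ⟨B * ((1 - ε₀) / μ) + 1,
    add_pos_of_nonneg_of_pos (mul_nonneg hB0 (div_nonneg (by linarith) hμ.le)) one_pos,
    fun ε hε hεε₀ s => ?_⟩
  calc _ ≤ c₇ * |s| + B * ((1 - ε₀) / μ) :=
        abs_sqrt_pEps_mul_mEpsEntropyPrime_le hmcont hmpos hε hεε₀ hε₀le hμ hmμ
          (fun s hs t ht hst => hmonoP s t hs.1 hst ht.2)
          (fun s hs t ht hst => hmonoM s t hs.1 hst ht.2) hPB hPm hc₇.le s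
    _ ≤ _ := by linarith

/-- Under the degeneracy and monotonicity assumptions on `m`, and
`√P ≤ c₇ m` near `±1`, there is `C > 0`, independent of `ε`, with
`|√(P_ε(s)) M_ε′(s)| ≤ c₇|s| + C` for all `ε ∈ (0,ε₀]` and `s ∈ ℝ`. -/
theorem stmt_10
    (m P : ℝ → ℝ)
    (hmcont : ContinuousOn m (Icc (-1 : ℝ) 1))
    (hmpos : ∀ s ∈ Ioo (-1 : ℝ) 1, 0 < m s)
    (hm1 : m 1 = 0) (hm1' : m (-1) = 0)
    (ε₀ : ℝ) (hε₀ : ε₀ ∈ Ioc (0 : ℝ) 1)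
    (hmonoP : ∀ s t : ℝ, 1 - ε₀ ≤ s → s ≤ t → t ≤ 1 → m t ≤ m s)
    (hmonoM : ∀ s t : ℝ, -1 ≤ s → s ≤ t → t ≤ -1 + ε₀ → m s ≤ m t)
    (c₇ : ℝ) (hc₇ : 0 < c₇)
    (hPcont : ContinuousOn P (Icc (-1 : ℝ) 1))
    (hPnonneg : ∀ s ∈ Icc (-1 : ℝ) 1, 0 ≤ P s)
    (hPm : ∀ s ∈ Icc (-1 : ℝ) (-1 + ε₀) ∪ Icc (1 - ε₀) 1, Real.sqrt (P s) ≤ c₇ * m s) :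
    ∃ C : ℝ, 0 < C ∧ ∀ ε : ℝ, 0 < ε → ε ≤ ε₀ → ∀ s : ℝ,
      |Real.sqrt (pEps P ε s) * mEpsEntropyPrime m ε s| ≤ c₇ * |s| + C :=
  stmt_10_general m P hmcont hmpos ε₀ hε₀ hmonoP hmonoM c₇ hc₇ hPcont hPm
end

section
/- Let Ω ⊂ ℝ³ be a bounded domain, a ∈ L^∞(Ω) with a ≥ 0 a.e., and let Ψ = Ψ₁ + Ψ₂ on (−1,1) with Ψ₁ ∈ C²((−1,1)), Ψ₂ ∈ C²([−1,1]). Let m ∈ C⁰([−1,1]) be non-negative, suppose m Ψ″ extends to a function in C⁰([−1,1]), that m(s)Ψ₁″(s) ≥ c₈ for all s ∈ [−1,1] and some c₈ > 0, and that there is ρ ∈ [0,1) with ρΨ₁″(s) + Ψ₂″(s) + a(x) ≥ 0 for all s ∈ (−1,1) and a.e. x ∈ Ω. Define Γ(s) := ∫₀^s m(r) dr and Λ(x,s) := ∫₀^s m(r)Ψ″(r) dr + a(x)Γ(s). Then for all measurable φ₁, φ₂ : Ω → ℝ with |φ₁| ≤ 1 and |φ₂| ≤ 1 a.e. in Ω: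 ∫_Ω (Λ(x,φ₁(x)) − Λ(x,φ₂(x)))(φ₁(x) − φ₂(x)) dx ≥ (1−ρ) c₈ ‖φ₁ − φ₂‖²_{L²(Ω)}. -/
/-!
For `s ∈ [-1,1]`, `Λ(x,s)` is a primitive of `h_x := G + a(x) m`, where `G` is the continuous
extension of `m Ψ″`. Writing `h_x = m (ρ Ψ₁″ + Ψ₂″ + a(x)) + (1 - ρ) m Ψ₁″` on `(-1,1)` shows
`h_x ≥ (1 - ρ) c₈`, hence `(Λ(x,s) - Λ(x,t)) (s - t) ≥ (1 - ρ) c₈ (s - t)²`, and integrating over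
`Ω` gives the claim. As `h_x` is also essentially bounded, the integrand is dominated by a multiple
of `(φ₁ - φ₂)²`: this gives integrability, and when `(φ₁ - φ₂)²` is not integrable the left side
is the junk value `0` while the right side is a nonnegative integral.
-/

open Set MeasureTheory

/-- `Γ(s) := ∫₀^s m(r) dr`. -/
noncomputable def GammaFn (m : ℝ → ℝ) (s : ℝ) : ℝ := ∫ r in (0 : ℝ)..s, m r

/-- `Λ(x,s) := ∫₀^s m(r) Ψ″(r) dr + a(x) Γ(s)`, with `Ψ″ = Ψ₁″ + Ψ₂″`. -/
noncomputable def LambdaFn (m Ψ₁'' Ψ₂'' : ℝ → ℝ) (a : (Fin 3 → ℝ) → ℝ)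
    (x : Fin 3 → ℝ) (s : ℝ) : ℝ :=
  (∫ r in (0 : ℝ)..s, m r * (Ψ₁'' r + Ψ₂'' r)) + a x * GammaFn m s

open intervalIntegral
open scoped Interval

lemma ContinuousOn.exists_continuous_eqOn_Icc {f : ℝ → ℝ} {a b : ℝ} (hab : a ≤ b)
    (hf : ContinuousOn f (Icc a b)) : ∃ g : ℝ → ℝ, Continuous g ∧ EqOn g f (Icc a b) :=
  ⟨IccExtend hab ((Icc a b).domRestrict f),
    (continuousOn_iff_continuous_domRestrict.1 hf).Icc_extend',
    fun _ hx => IccExtend_of_mem _ _ hx⟩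

lemma MeasureTheory.MemLp.exists_ae_abs_le {α : Type*} [MeasurableSpace α] {μ : Measure α}
    {f : α → ℝ} (hf : MemLp f ⊤ μ) : ∃ C, ∀ᵐ x ∂μ, |f x| ≤ C := by
  refine ⟨(eLpNormEssSup f μ).toReal, ?_⟩
  have hfin : eLpNormEssSup f μ ≠ ⊤ := by simpa [eLpNorm_exponent_top] using hf.eLpNorm_ne_top
  filter_upwards [ae_le_eLpNormEssSup (f := f) (μ := μ)] with x hx
  simpa [Real.norm_eq_abs] using ENNReal.toReal_mono hfin hx

lemma MeasureTheory.mul_integral_le_integral_of_mul_le_of_abs_le {α : Type*}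
    [MeasurableSpace α] {μ : Measure α} {f g : α → ℝ} {c K : ℝ} (hc : 0 ≤ c)
    (hf : AEStronglyMeasurable f μ) (hg : 0 ≤ᵐ[μ] g) (hlow : ∀ᵐ x ∂μ, c * g x ≤ f x)
    (hup : ∀ᵐ x ∂μ, |f x| ≤ K * g x) :
    c * ∫ x, g x ∂μ ≤ ∫ x, f x ∂μ := by
  by_cases hgi : Integrable g μ
  · rw [← integral_const_mul]
    exact integral_mono_ae (hgi.const_mul c) (hgi.const_mul K |>.mono' hf hup) hlow
  · rw [integral_undef hgi, mul_zero]
    refine integral_nonneg_of_ae ?_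
    filter_upwards [hg, hlow] with x hgx hx
    exact (mul_nonneg hc hgx).trans hx

lemma intervalIntegral.integral_congr_of_eqOn_Ioo {f g : ℝ → ℝ} {a b s t : ℝ}
    (hs : s ∈ Icc a b) (ht : t ∈ Icc a b) (h : EqOn f g (Ioo a b)) :
    ∫ r in s..t, f r = ∫ r in s..t, g r := by
  refine integral_congr_ae ?_
  filter_upwards [volume.ae_ne b] with r hrb hr
  exact h ⟨(le_min hs.1 ht.1).trans_lt hr.1, (hr.2.trans (max_le hs.2 ht.2)).lt_of_ne hrb⟩

lemma intervalIntegral.integral_add_mul_sub_integral_add_mul {g k : ℝ → ℝ}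
    (hg : Continuous g) (hk : Continuous k) (A s t : ℝ) :
    ((∫ r in 0..t, g r) + A * ∫ r in 0..t, k r) - ((∫ r in 0..s, g r) + A * ∫ r in 0..s, k r)
      = ∫ r in s..t, (g r + A * k r) := by
  rw [integral_add (hg.intervalIntegrable _ _) ((hk.intervalIntegrable _ _).const_mul A),
    integral_const_mul, ← integral_interval_sub_left (hg.intervalIntegrable 0 t)
      (hg.intervalIntegrable 0 s), ← integral_interval_sub_left (hk.intervalIntegrable 0 t)
      (hk.intervalIntegrable 0 s)]
  ring

lemma mul_sub_le_integral_of_le {h : ℝ → ℝ} {s t c : ℝ} (hst : s ≤ t)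
    (hh : IntervalIntegrable h volume s t) (hc : ∀ r ∈ Ioo s t, c ≤ h r) :
    c * (t - s) ≤ ∫ r in s..t, h r := by
  have := integral_mono_on_of_le_Ioo hst intervalIntegrable_const hh hc
  rwa [intervalIntegral.integral_const, smul_eq_mul, mul_comm] at this

lemma mul_sq_le_integral_mul_sub {h : ℝ → ℝ} {a b s t c : ℝ} (hs : s ∈ Icc a b)
    (ht : t ∈ Icc a b) (hh : IntervalIntegrable h volume s t) (hc : ∀ r ∈ Ioo a b, c ≤ h r) :
    c * (t - s) ^ 2 ≤ (∫ r in s..t, h r) * (t - s) := by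
  have hc' : ∀ r ∈ Ioo (min s t) (max s t), c ≤ h r :=
    fun r hr => hc r (Ioo_subset_Ioo (le_min hs.1 ht.1) (max_le hs.2 ht.2) hr)
  rcases le_total s t with hst | hts
  · rw [min_eq_left hst, max_eq_right hst] at hc'
    nlinarith [mul_sub_le_integral_of_le hst hh hc']
  · rw [min_eq_right hts, max_eq_left hts] at hc'
    rw [integral_symm]
    nlinarith [mul_sub_le_integral_of_le hts hh.symm hc']

lemma abs_integral_mul_sub_le {h : ℝ → ℝ} {a b s t K : ℝ} (hs : s ∈ Icc a b)
    (ht : t ∈ Icc a b) (hK : ∀ r ∈ Icc a b, |h r| ≤ K) :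
    |(∫ r in s..t, h r) * (t - s)| ≤ K * (t - s) ^ 2 := by
  have : ‖∫ r in s..t, h r‖ ≤ K * |t - s| :=
    norm_integral_le_of_norm_le_const fun r hr => hK r (uIcc_subset_Icc hs ht (uIoc_subset_uIcc hr))
  rw [abs_mul, ← sq_abs (t - s), sq]
  exact mul_le_mul_of_nonneg_right this (abs_nonneg _) |>.trans_eq (by ring)

lemma one_sub_mul_le_mul_add_mul {ρ c m p₁ p₂ A : ℝ} (hρ : ρ ≤ 1) (hm : 0 ≤ m)
    (hconv : 0 ≤ ρ * p₁ + p₂ + A) (hc : c ≤ m * p₁) : (1 - ρ) * c ≤ m * (p₁ + p₂) + A * m := by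
  linarith [mul_nonneg hm hconv, mul_le_mul_of_nonneg_left hc (sub_nonneg.2 hρ)]

lemma abs_add_mul_le {u v A M N C : ℝ} (hu : |u| ≤ M) (hA : |A| ≤ C) (hv : |v| ≤ N) :
    |u + A * v| ≤ M + C * N := by
  refine (abs_add_le _ _).trans (add_le_add hu ?_)
  rw [abs_mul]
  exact mul_le_mul hA hv (abs_nonneg _) ((abs_nonneg _).trans hA)

lemma LambdaFn_eq_of_eqOn_Ioo {m Ψ₁'' Ψ₂'' g k : ℝ → ℝ} {a : (Fin 3 → ℝ) → ℝ}
    (hg : EqOn g (fun r => m r * (Ψ₁'' r + Ψ₂'' r)) (Ioo (-1) 1)) (hk : EqOn k m (Ioo (-1) 1))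
    (x : Fin 3 → ℝ) {s : ℝ} (hs : s ∈ Icc (-1 : ℝ) 1) :
    LambdaFn m Ψ₁'' Ψ₂'' a x s = (∫ r in 0..s, g r) + a x * ∫ r in 0..s, k r := by
  have h0 : (0 : ℝ) ∈ Icc (-1) 1 := by norm_num
  rw [LambdaFn, GammaFn, integral_congr_of_eqOn_Ioo h0 hs hg, integral_congr_of_eqOn_Ioo h0 hs hk]

theorem stmt_12_general
    (Ω : Set (Fin 3 → ℝ))
    (a : (Fin 3 → ℝ) → ℝ) (haL : MemLp a ⊤ (volume.restrict Ω))
    (Ψ₁'' Ψ₂'' m G G₁ : ℝ → ℝ)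
    (hmcont : ContinuousOn m (Icc (-1 : ℝ) 1))
    (hmnonneg : ∀ s ∈ Icc (-1 : ℝ) 1, 0 ≤ m s)
    -- `m Ψ″` extends to a continuous function `G` on `[-1,1]`
    (hGcont : ContinuousOn G (Icc (-1 : ℝ) 1))
    (hGext : ∀ s ∈ Ioo (-1 : ℝ) 1, G s = m s * (Ψ₁'' s + Ψ₂'' s))
    -- `m Ψ₁″` extends to a continuous function `G₁` on `[-1,1]` with `m Ψ₁″ ≥ c₈` there
    (hG₁ext : ∀ s ∈ Ioo (-1 : ℝ) 1, G₁ s = m s * Ψ₁'' s)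
    (c₈ : ℝ) (hc₈ : 0 < c₈)
    (hG₁lb : ∀ s ∈ Icc (-1 : ℝ) 1, c₈ ≤ G₁ s)
    (ρ : ℝ) (hρ1 : ρ < 1)
    (hconvex : ∀ᵐ x ∂(volume.restrict Ω), ∀ s ∈ Ioo (-1 : ℝ) 1,
      0 ≤ ρ * Ψ₁'' s + Ψ₂'' s + a x)
    (φ₁ φ₂ : (Fin 3 → ℝ) → ℝ) (hφ₁meas : Measurable φ₁) (hφ₂meas : Measurable φ₂)
    (hφ₁bd : ∀ᵐ x ∂(volume.restrict Ω), |φ₁ x| ≤ 1)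
    (hφ₂bd : ∀ᵐ x ∂(volume.restrict Ω), |φ₂ x| ≤ 1) :
    (1 - ρ) * c₈ * (∫ x in Ω, (φ₁ x - φ₂ x) ^ 2)
      ≤ ∫ x in Ω, (LambdaFn m Ψ₁'' Ψ₂'' a x (φ₁ x) - LambdaFn m Ψ₁'' Ψ₂'' a x (φ₂ x))
          * (φ₁ x - φ₂ x) := by
  obtain ⟨g, hg, hgG⟩ := hGcont.exists_continuous_eqOn_Icc (by norm_num)
  obtain ⟨k, hk, hkm⟩ := hmcont.exists_continuous_eqOn_Icc (by norm_num)
  obtain ⟨Mg, hMg⟩ : ∃ M, ∀ r ∈ Icc (-1 : ℝ) 1, ‖g r‖ ≤ M :=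
    isCompact_Icc.exists_bound_of_continuousOn hg.continuousOn
  obtain ⟨Mk, hMk⟩ : ∃ M, ∀ r ∈ Icc (-1 : ℝ) 1, ‖k r‖ ≤ M :=
    isCompact_Icc.exists_bound_of_continuousOn hk.continuousOn
  obtain ⟨C, hC⟩ := haL.exists_ae_abs_le
  have hg' : EqOn g (fun r => m r * (Ψ₁'' r + Ψ₂'' r)) (Ioo (-1) 1) := fun r hr =>
    (hgG (Ioo_subset_Icc_self hr)).trans (hGext r hr)
  have hk' : EqOn k m (Ioo (-1) 1) := hkm.mono Ioo_subset_Icc_self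
  have hlow : ∀ A, (∀ s ∈ Ioo (-1 : ℝ) 1, 0 ≤ ρ * Ψ₁'' s + Ψ₂'' s + A) →
      ∀ r ∈ Ioo (-1 : ℝ) 1, (1 - ρ) * c₈ ≤ g r + A * k r := by
    intro A hA r hr
    rw [hg' hr, hk' hr]
    exact one_sub_mul_le_mul_add_mul hρ1.le (hmnonneg r (Ioo_subset_Icc_self hr)) (hA r hr)
      (hG₁ext r hr ▸ hG₁lb r (Ioo_subset_Icc_self hr))
  set Λ : (Fin 3 → ℝ) → ℝ → ℝ := fun x s => (∫ r in 0..s, g r) + a x * ∫ r in 0..s, k r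
  have hΛmeas : AEStronglyMeasurable (fun x => (Λ x (φ₁ x) - Λ x (φ₂ x)) * (φ₁ x - φ₂ x))
      (volume.restrict Ω) := by
    have hG := continuous_primitive (μ := volume) (fun _ _ => hg.intervalIntegrable _ _) 0
    have hK := continuous_primitive (μ := volume) (fun _ _ => hk.intervalIntegrable _ _) 0
    have ha := haL.1
    simp only [Λ]
    fun_prop
  have hbounds : ∀ᵐ x ∂(volume.restrict Ω),
      (1 - ρ) * c₈ * (φ₁ x - φ₂ x) ^ 2 ≤ (Λ x (φ₁ x) - Λ x (φ₂ x)) * (φ₁ x - φ₂ x) ∧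
      |(Λ x (φ₁ x) - Λ x (φ₂ x)) * (φ₁ x - φ₂ x)| ≤ (Mg + C * Mk) * (φ₁ x - φ₂ x) ^ 2 := by
    filter_upwards [hφ₁bd, hφ₂bd, hC, hconvex] with x h₁ h₂ hCx hx
    rw [integral_add_mul_sub_integral_add_mul hg hk]
    exact ⟨mul_sq_le_integral_mul_sub (abs_le.1 h₂) (abs_le.1 h₁)
        ((hg.add (continuous_const.mul hk)).intervalIntegrable _ _) (hlow _ hx),
      abs_integral_mul_sub_le (abs_le.1 h₂) (abs_le.1 h₁) fun r hr =>
        abs_add_mul_le (hMg r hr) hCx (hMk r hr)⟩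
  calc (1 - ρ) * c₈ * (∫ x in Ω, (φ₁ x - φ₂ x) ^ 2)
      ≤ ∫ x in Ω, (Λ x (φ₁ x) - Λ x (φ₂ x)) * (φ₁ x - φ₂ x) :=
        mul_integral_le_integral_of_mul_le_of_abs_le (mul_nonneg (by linarith) hc₈.le) hΛmeas
          (ae_of_all _ fun _ => sq_nonneg _) (hbounds.mono fun _ => And.left)
          (hbounds.mono fun _ => And.right)
    _ = _ := integral_congr_ae <| by
        filter_upwards [hφ₁bd, hφ₂bd] with x h₁ h₂
        rw [LambdaFn_eq_of_eqOn_Ioo hg' hk' x (abs_le.1 h₁),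
          LambdaFn_eq_of_eqOn_Ioo hg' hk' x (abs_le.1 h₂)]

/-- Strong monotonicity of `Λ`:
`∫_Ω (Λ(x,φ₁) - Λ(x,φ₂))(φ₁ - φ₂) dx ≥ (1-ρ) c₈ ‖φ₁ - φ₂‖²_{L²(Ω)}`. -/
theorem stmt_12
    (Ω : Set (Fin 3 → ℝ)) (hΩopen : IsOpen Ω) (hΩconn : IsConnected Ω)
    (hΩbdd : Bornology.IsBounded Ω) (hΩmeas : MeasurableSet Ω)
    (a : (Fin 3 → ℝ) → ℝ) (haL : MemLp a ⊤ (volume.restrict Ω))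
    (ha0 : ∀ᵐ x ∂(volume.restrict Ω), 0 ≤ a x)
    (Ψ₁ Ψ₁' Ψ₁'' Ψ₂ Ψ₂' Ψ₂'' m G G₁ : ℝ → ℝ)
    (hΨ₁d : ∀ s ∈ Ioo (-1 : ℝ) 1, HasDerivAt Ψ₁ (Ψ₁' s) s)
    (hΨ₁d2 : ∀ s ∈ Ioo (-1 : ℝ) 1, HasDerivAt Ψ₁' (Ψ₁'' s) s)
    (hΨ₁''cont : ContinuousOn Ψ₁'' (Ioo (-1 : ℝ) 1))
    (hΨ₂d : ∀ s ∈ Icc (-1 : ℝ) 1, HasDerivWithinAt Ψ₂ (Ψ₂' s) (Icc (-1 : ℝ) 1) s)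
    (hΨ₂d2 : ∀ s ∈ Icc (-1 : ℝ) 1, HasDerivWithinAt Ψ₂' (Ψ₂'' s) (Icc (-1 : ℝ) 1) s)
    (hΨ₂''cont : ContinuousOn Ψ₂'' (Icc (-1 : ℝ) 1))
    (hmcont : ContinuousOn m (Icc (-1 : ℝ) 1))
    (hmnonneg : ∀ s ∈ Icc (-1 : ℝ) 1, 0 ≤ m s)
    -- `m Ψ″` extends to a continuous function `G` on `[-1,1]`
    (hGcont : ContinuousOn G (Icc (-1 : ℝ) 1))
    (hGext : ∀ s ∈ Ioo (-1 : ℝ) 1, G s = m s * (Ψ₁'' s + Ψ₂'' s))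
    -- `m Ψ₁″` extends to a continuous function `G₁` on `[-1,1]` with `m Ψ₁″ ≥ c₈` there
    (hG₁cont : ContinuousOn G₁ (Icc (-1 : ℝ) 1))
    (hG₁ext : ∀ s ∈ Ioo (-1 : ℝ) 1, G₁ s = m s * Ψ₁'' s)
    (c₈ : ℝ) (hc₈ : 0 < c₈)
    (hG₁lb : ∀ s ∈ Icc (-1 : ℝ) 1, c₈ ≤ G₁ s)
    (ρ : ℝ) (hρ0 : 0 ≤ ρ) (hρ1 : ρ < 1)
    (hconvex : ∀ᵐ x ∂(volume.restrict Ω), ∀ s ∈ Ioo (-1 : ℝ) 1,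
      0 ≤ ρ * Ψ₁'' s + Ψ₂'' s + a x)
    (φ₁ φ₂ : (Fin 3 → ℝ) → ℝ) (hφ₁meas : Measurable φ₁) (hφ₂meas : Measurable φ₂)
    (hφ₁bd : ∀ᵐ x ∂(volume.restrict Ω), |φ₁ x| ≤ 1)
    (hφ₂bd : ∀ᵐ x ∂(volume.restrict Ω), |φ₂ x| ≤ 1) :
    (1 - ρ) * c₈ * (∫ x in Ω, (φ₁ x - φ₂ x) ^ 2)
      ≤ ∫ x in Ω, (LambdaFn m Ψ₁'' Ψ₂'' a x (φ₁ x) - LambdaFn m Ψ₁'' Ψ₂'' a x (φ₂ x))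
          * (φ₁ x - φ₂ x) :=
  stmt_12_general Ω a haL Ψ₁'' Ψ₂'' m G G₁ hmcont hmnonneg hGcont hGext hG₁ext c₈ hc₈ hG₁lb ρ hρ1
    hconvex φ₁ φ₂ hφ₁meas hφ₂meas hφ₁bd hφ₂bd
end

section
/- Let m ∈ C⁰([−1,1]) satisfy m(s) > 0 for |s| < 1, and suppose that for some ε₀ ∈ (0,1], m is non-increasing on [1−ε₀,1] and non-decreasing on [−1,−1+ε₀]. Then for every ε ∈ (0,ε₀] and every s ∈ (−1,1): M_ε(s) ≤ M(s) and |M_ε′(s)| ≤ |M′(s)|. -/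
open Set MeasureTheory

/-- `M′(s) = ∫₀^s 1/m(r) dr`, the derivative of the entropy function of the mobility `m`
(so that `m M″ = 1`, `M′(0) = 0`). -/
noncomputable def entropyPrime (m : ℝ → ℝ) (s : ℝ) : ℝ := ∫ r in (0 : ℝ)..s, (m r)⁻¹

/-- The entropy function `M(s) = ∫₀^s M′(t) dt` of the mobility `m`
(so that `m M″ = 1`, `M(0) = M′(0) = 0`). -/
noncomputable def entropyFn (m : ℝ → ℝ) (s : ℝ) : ℝ := ∫ t in (0 : ℝ)..s, entropyPrime m t

lemma mEps_eq_clamp (m : ℝ → ℝ) {ε : ℝ} (hε : ε ≤ 1) (s : ℝ) :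
    mEps m ε s = m (max (-1 + ε) (min s (1 - ε))) := by
  unfold mEps
  rcases le_or_gt (1 - ε) s with h | h
  · rw [if_pos h, min_eq_right h, max_eq_right (by linarith : (-1 + ε) ≤ 1 - ε)]
  · rw [if_neg (not_le.mpr h), min_eq_left h.le]
    rcases le_or_gt s (-1 + ε) with h2 | h2
    · rw [if_pos h2, max_eq_left h2]
    · rw [if_neg (not_le.mpr h2), max_eq_right h2.le]

lemma primitive_monoOn {g : ℝ → ℝ}
    (hI : ∀ u v : ℝ, u ∈ Ioo (-1:ℝ) 1 → v ∈ Ioo (-1:ℝ) 1 → IntervalIntegrable g volume u v)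
    (hg : ∀ r ∈ Ioo (-1:ℝ) 1, 0 ≤ g r) {a b : ℝ}
    (hab : Icc a b ⊆ Ioo (-1:ℝ) 1) :
    MonotoneOn (fun t => ∫ r in (0:ℝ)..t, g r) (Icc a b) := by
  intro x hx y hy hxy
  have h0 : (0:ℝ) ∈ Ioo (-1:ℝ) 1 := by norm_num
  have hxI := hab hx
  have hyI := hab hy
  have h1 : (∫ r in (0:ℝ)..x, g r) + ∫ r in x..y, g r = ∫ r in (0:ℝ)..y, g r :=
    intervalIntegral.integral_add_adjacent_intervals (hI 0 x h0 hxI) (hI x y hxI hyI)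
  have h2 : 0 ≤ ∫ r in x..y, g r := by
    apply intervalIntegral.integral_nonneg hxy
    intro u hu
    exact hg u ⟨lt_of_lt_of_le hxI.1 hu.1, lt_of_le_of_lt hu.2 hyI.2⟩
  simp only []
  linarith

/-- If `m` is non-increasing on `[1-ε₀,1]` and non-decreasing on
`[-1,-1+ε₀]`, then for every `ε ∈ (0,ε₀]` and `s ∈ (-1,1)`:
`M_ε(s) ≤ M(s)` and `|M_ε′(s)| ≤ |M′(s)|`. -/
theorem stmt_15
    (m : ℝ → ℝ)
    (hmcont : ContinuousOn m (Icc (-1 : ℝ) 1))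
    (hmpos : ∀ s ∈ Ioo (-1 : ℝ) 1, 0 < m s)
    (ε₀ : ℝ) (hε₀ : ε₀ ∈ Ioc (0 : ℝ) 1)
    (hmonoP : ∀ s t : ℝ, 1 - ε₀ ≤ s → s ≤ t → t ≤ 1 → m t ≤ m s)
    (hmonoM : ∀ s t : ℝ, -1 ≤ s → s ≤ t → t ≤ -1 + ε₀ → m s ≤ m t) :
    ∀ ε : ℝ, 0 < ε → ε ≤ ε₀ → ∀ s ∈ Ioo (-1 : ℝ) 1,
      entropyFn (mEps m ε) s ≤ entropyFn m s ∧
      |entropyPrime (mEps m ε) s| ≤ |entropyPrime m s| := by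
  intro ε hε hεε₀ s hs
  have hε1 : ε ≤ 1 := hεε₀.trans hε₀.2
  have h0mem : (0:ℝ) ∈ Ioo (-1:ℝ) 1 := by norm_num
  -- clamp
  set c : ℝ → ℝ := fun r => max (-1 + ε) (min r (1 - ε)) with hcdef
  have hcmem : ∀ r, c r ∈ Ioo (-1:ℝ) 1 := by
    intro r
    have h1 : -1 + ε ≤ c r := le_max_left _ _
    have h2 : c r ≤ 1 - ε := max_le (by linarith) (min_le_right _ _)
    exact ⟨by linarith, by linarith⟩
  have hmE : ∀ r, mEps m ε r = m (c r) := fun r => mEps_eq_clamp m hε1 r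
  have hcont_c : Continuous c := (continuous_const.max (continuous_id.min continuous_const))
  have hcontE : Continuous (mEps m ε) := by
    have : Continuous fun r => m (c r) :=
      hmcont.comp_continuous hcont_c fun r => Ioo_subset_Icc_self (hcmem r)
    simpa only [← hmE] using this
  have hposE : ∀ r, 0 < mEps m ε r := fun r => (hmE r) ▸ hmpos _ (hcmem r)
  -- pointwise mobility inequality
  have hle : ∀ r ∈ Ioo (-1:ℝ) 1, m r ≤ mEps m ε r := by
    intro r hr
    unfold mEps
    rcases le_or_gt (1 - ε) r with h | h
    · rw [if_pos h]
      exact hmonoP (1 - ε) r (by linarith) h hr.2.le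
    · rw [if_neg (not_le.mpr h)]
      rcases le_or_gt r (-1 + ε) with h2 | h2
      · rw [if_pos h2]
        exact hmonoM r (-1 + ε) hr.1.le h2 (by linarith)
      · rw [if_neg (not_le.mpr h2)]
  -- integrand inequalities
  have hfE_pos : ∀ r, 0 < (mEps m ε r)⁻¹ := fun r => inv_pos.mpr (hposE r)
  have hfle : ∀ r ∈ Ioo (-1:ℝ) 1, (mEps m ε r)⁻¹ ≤ (m r)⁻¹ := fun r hr =>
    inv_anti₀ (hmpos r hr) (hle r hr)
  -- integrability
  have hIfE : ∀ u v : ℝ, IntervalIntegrable (fun r => (mEps m ε r)⁻¹) volume u v := by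
    intro u v
    exact (hcontE.inv₀ fun r => (hposE r).ne').intervalIntegrable u v
  have hIf : ∀ u v : ℝ, u ∈ Ioo (-1:ℝ) 1 → v ∈ Ioo (-1:ℝ) 1 →
      IntervalIntegrable (fun r => (m r)⁻¹) volume u v := by
    intro u v hu hv
    have hsub : uIcc u v ⊆ Ioo (-1:ℝ) 1 := by
      intro x hx
      exact ⟨lt_of_lt_of_le (lt_min hu.1 hv.1) hx.1, lt_of_le_of_lt hx.2 (max_lt hu.2 hv.2)⟩
    have : ContinuousOn (fun r => (m r)⁻¹) (Ioo (-1:ℝ) 1) :=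
      (hmcont.mono Ioo_subset_Icc_self).inv₀ fun r hr => (hmpos r hr).ne'
    exact (this.mono hsub).intervalIntegrable
  -- entropyPrime comparison
  have key : ∀ t ∈ Ioo (-1:ℝ) 1,
      (0 ≤ t → 0 ≤ entropyPrime (mEps m ε) t ∧ entropyPrime (mEps m ε) t ≤ entropyPrime m t) ∧
      (t ≤ 0 → entropyPrime (mEps m ε) t ≤ 0 ∧ entropyPrime m t ≤ entropyPrime (mEps m ε) t) := by
    intro t ht
    constructor
    · intro ht0
      constructor
      · exact intervalIntegral.integral_nonneg ht0 fun u _ => (hfE_pos u).le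
      · apply intervalIntegral.integral_mono_on ht0 (hIfE 0 t) (hIf 0 t h0mem ht)
        intro u hu
        exact hfle u ⟨by linarith [hu.1], lt_of_le_of_lt hu.2 ht.2⟩
    · intro ht0
      have e1 : entropyPrime (mEps m ε) t = -∫ r in t..(0:ℝ), (mEps m ε r)⁻¹ := by
        rw [entropyPrime, intervalIntegral.integral_symm]
      have e2 : entropyPrime m t = -∫ r in t..(0:ℝ), (m r)⁻¹ := by
        rw [entropyPrime, intervalIntegral.integral_symm]
      have h1 : 0 ≤ ∫ r in t..(0:ℝ), (mEps m ε r)⁻¹ :=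
        intervalIntegral.integral_nonneg ht0 fun u _ => (hfE_pos u).le
      have h2 : (∫ r in t..(0:ℝ), (mEps m ε r)⁻¹) ≤ ∫ r in t..(0:ℝ), (m r)⁻¹ := by
        apply intervalIntegral.integral_mono_on ht0 (hIfE t 0)
          (hIf t 0 ht h0mem)
        intro u hu
        exact hfle u ⟨lt_of_lt_of_le ht.1 hu.1, by linarith [hu.2]⟩
      rw [e1, e2]
      constructor <;> linarith
  -- abs inequality
  have habs : |entropyPrime (mEps m ε) s| ≤ |entropyPrime m s| := by
    rcases le_or_gt 0 s with h | h
    · obtain ⟨h1, h2⟩ := (key s hs).1 h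
      rw [abs_of_nonneg h1, abs_of_nonneg (h1.trans h2)]
      exact h2
    · obtain ⟨h1, h2⟩ := (key s hs).2 h.le
      rw [abs_of_nonpos h1, abs_of_nonpos (h2.trans h1)]
      linarith
  refine ⟨?_, habs⟩
  -- entropyFn comparison; need integrability of primitives via monotonicity
  have hIPE : ∀ a b : ℝ, Icc a b ⊆ Ioo (-1:ℝ) 1 → a ≤ b →
      IntervalIntegrable (entropyPrime (mEps m ε)) volume a b := by
    intro a b hab hab'
    have := primitive_monoOn (g := fun r => (mEps m ε r)⁻¹)
      (fun u v _ _ => hIfE u v) (fun r _ => (hfE_pos r).le) hab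
    have : MonotoneOn (entropyPrime (mEps m ε)) (uIcc a b) := by
      rw [uIcc_of_le hab']
      exact this
    exact this.intervalIntegrable
  have hIP : ∀ a b : ℝ, Icc a b ⊆ Ioo (-1:ℝ) 1 → a ≤ b →
      IntervalIntegrable (entropyPrime m) volume a b := by
    intro a b hab hab'
    have := primitive_monoOn (g := fun r => (m r)⁻¹) hIf
      (fun r hr => (inv_pos.mpr (hmpos r hr)).le) hab
    have : MonotoneOn (entropyPrime m) (uIcc a b) := by
      rw [uIcc_of_le hab']
      exact this
    exact this.intervalIntegrable
  rcases le_or_gt 0 s with h | h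
  · have hsub : Icc (0:ℝ) s ⊆ Ioo (-1:ℝ) 1 := fun x hx =>
      ⟨by linarith [hx.1], lt_of_le_of_lt hx.2 hs.2⟩
    apply intervalIntegral.integral_mono_on h (hIPE 0 s hsub h) (hIP 0 s hsub h)
    intro t ht
    exact ((key t (hsub ht)).1 ht.1).2
  · have hsub : Icc s (0:ℝ) ⊆ Ioo (-1:ℝ) 1 := fun x hx =>
      ⟨lt_of_lt_of_le hs.1 hx.1, by linarith [hx.2]⟩
    have e1 : entropyFn (mEps m ε) s = -∫ t in s..(0:ℝ), entropyPrime (mEps m ε) t := by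
      rw [entropyFn, intervalIntegral.integral_symm]
    have e2 : entropyFn m s = -∫ t in s..(0:ℝ), entropyPrime m t := by
      rw [entropyFn, intervalIntegral.integral_symm]
    have hmono : (∫ t in s..(0:ℝ), entropyPrime m t) ≤
        ∫ t in s..(0:ℝ), entropyPrime (mEps m ε) t := by
      apply intervalIntegral.integral_mono_on h.le (hIP s 0 hsub h.le) (hIPE s 0 hsub h.le)
      intro t ht
      exact ((key t (hsub ht)).2 ht.2).2
    rw [e1, e2]
    linarith
end
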